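/- arXiv:1502.07557 — 6 statements merged into one kernel-verified Lean document; each statement's English description precedes it below -/
import Mathlib

section
/- For all real scalar sequences (a_i) and (b_i) with only finitely many nonzero terms, one has (1/2)·∑_i |a_i| + (1/8)·‖∑_i b_i h_i‖_{L1} ≤ ‖∑_i a_i (2·1_{(π(i)−1,π(i))} + |h_i|) + ∑_i b_i h_i‖_{L1} ≤ 3·∑_i |a_i| + ‖∑_i b_i h_i‖_{L1}. -/
open MeasureTheory Filter Topology

/-- Index set for the Haar system: triples `(j, n, i)` with `1 ≤ i ≤ 2 ^ n`;
`j` (0-based) labels the interval `(j, j+1)`. -/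
def HaarIdx : Type := {x : ℕ × ℕ × ℕ // 1 ≤ x.2.2 ∧ x.2.2 ≤ 2 ^ x.2.1}

/-- The mean zero `L₁`-normalized Haar function `h_{n,i}` on the interval `(j, j+1)`. -/
noncomputable def haarFun (j n i : ℕ) : ℝ → ℝ := fun t =>
  if (j : ℝ) + (2 * i - 2) / 2 ^ (n + 1) < t ∧ t < (j : ℝ) + (2 * i - 1) / 2 ^ (n + 1) then
    2 ^ n
  else if (j : ℝ) + (2 * i - 1) / 2 ^ (n + 1) < t ∧ t < (j : ℝ) + (2 * i) / 2 ^ (n + 1) then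
    -(2 ^ n)
  else 0

/-- An enumeration of the whole Haar system given by a bijection `e : ℕ ≃ HaarIdx`. -/
noncomputable def haarSeq (e : ℕ ≃ HaarIdx) (k : ℕ) : ℝ → ℝ :=
  haarFun (e k).1.1 (e k).1.2.1 (e k).1.2.2

/-!
Write `f = ∑ aᵢ φᵢ` with `φᵢ = 2·1_{(π i, π i + 1)} + |hᵢ|` (`bumpFun`) and `g = ∑ bᵢ hᵢ`.
Each `φᵢ` is nonnegative with integral `3`, so `‖f‖₁ ≤ 3 ∑ |aᵢ|`; the upper bound and
`‖g‖₁ ≤ ‖f + g‖₁ + 3 ∑ |aᵢ|` are then the triangle inequality.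

For `∑ |aᵢ| ≤ ‖f + g‖₁`, integrate `f + g` over the disjoint unit cells `(π m, π m + 1)`.
Every `hᵢ` is supported in a single unit cell and has mean zero, so the integral over the `m`-th
cell is `2 a_m` plus the sum of those `aᵢ` whose `hᵢ` lives in that cell. As each `hᵢ` lives in
only one cell, these error terms add up to at most `∑ |aᵢ|` in absolute value, leaving
`∑ |aᵢ|`. The two lower bounds combine to `∑ |aᵢ| / 2 + ‖g‖₁ / 8 ≤ ‖f + g‖₁`.
-/

open Set Function

section L1

variable {α : Type*} [MeasurableSpace α] {μ : Measure α}

lemma integral_abs_add_le {u v : α → ℝ} (hu : Integrable u μ) (hv : Integrable v μ) :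
    ∫ x, |u x + v x| ∂μ ≤ ∫ x, |u x| ∂μ + ∫ x, |v x| ∂μ := by
  rw [← integral_add hu.abs hv.abs]
  exact integral_mono (hu.add hv).abs (hu.abs.add hv.abs) fun x => abs_add_le _ _

lemma integral_abs_sum_mul_le {ι : Type*} (s : Finset ι) (a : ι → ℝ) {φ : ι → α → ℝ}
    (hφ : ∀ i ∈ s, Integrable (φ i) μ) :
    ∫ x, |∑ i ∈ s, a i * φ i x| ∂μ ≤ ∑ i ∈ s, |a i| * ∫ x, |φ i x| ∂μ := by
  have hint : ∀ i ∈ s, Integrable (fun x => |a i| * |φ i x|) μ :=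
    fun i hi => (hφ i hi).abs.const_mul _
  calc ∫ x, |∑ i ∈ s, a i * φ i x| ∂μ ≤ ∫ x, ∑ i ∈ s, |a i| * |φ i x| ∂μ :=
        integral_mono (integrable_finsetSum s fun i hi => (hφ i hi).const_mul (a i)).abs
          (integrable_finsetSum s hint)
          fun x => (Finset.abs_sum_le_sum_abs _ _).trans_eq (by simp only [abs_mul])
    _ = ∑ i ∈ s, |a i| * ∫ x, |φ i x| ∂μ := by
        rw [integral_finsetSum s hint]
        simp only [integral_const_mul]

lemma sum_abs_setIntegral_le_setIntegral_abs {ι : Type*} (s : Finset ι) {S : ι → Set α}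
    {T : Set α} (hS : ∀ i ∈ s, MeasurableSet (S i)) (hST : ∀ i ∈ s, S i ⊆ T)
    (hdisj : (s : Set ι).Pairwise (Disjoint on S)) {F : α → ℝ} (hF : IntegrableOn F T μ) :
    ∑ i ∈ s, |∫ x in S i, F x ∂μ| ≤ ∫ x in T, |F x| ∂μ :=
  calc ∑ i ∈ s, |∫ x in S i, F x ∂μ| ≤ ∑ i ∈ s, ∫ x in S i, |F x| ∂μ :=
        Finset.sum_le_sum fun _ _ => abs_integral_le_integral_abs
    _ = ∫ x in ⋃ i ∈ s, S i, |F x| ∂μ :=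
        (integral_biUnion_finset s hS hdisj fun i hi => (hF.mono_set (hST i hi)).abs).symm
    _ ≤ ∫ x in T, |F x| ∂μ :=
        setIntegral_mono_set hF.abs (ae_of_all _ fun _ => abs_nonneg _)
          (iUnion₂_subset hST).eventuallyLE

end L1

lemma sum_abs_sum_ite_le {ι β : Type*} [DecidableEq β] (s : Finset ι) (π : ι ≃ β) (j : ι → β)
    (a : ι → ℝ) :
    ∑ m ∈ s, |∑ i ∈ s, if π m = j i then a i else 0| ≤ ∑ i ∈ s, |a i| := by
  classical
  calc ∑ m ∈ s, |∑ i ∈ s, if π m = j i then a i else 0|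
      ≤ ∑ m ∈ s, ∑ i ∈ s, if m = π.symm (j i) then |a i| else 0 := by
        refine Finset.sum_le_sum fun m _ => (Finset.abs_sum_le_sum_abs _ _).trans_eq
          (Finset.sum_congr rfl fun i _ => ?_)
        rw [π.eq_symm_apply]
        split_ifs <;> simp
    _ = ∑ i ∈ s, if π.symm (j i) ∈ s then |a i| else 0 := by
        rw [Finset.sum_comm]
        simp only [Finset.sum_ite_eq']
    _ ≤ ∑ i ∈ s, |a i| := Finset.sum_le_sum fun i _ => by split_ifs <;> simp

lemma sum_abs_le_sum_abs_two_mul_add {ι : Type*} (s : Finset ι) {a c : ι → ℝ}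
    (hc : ∑ m ∈ s, |c m| ≤ ∑ m ∈ s, |a m|) :
    ∑ m ∈ s, |a m| ≤ ∑ m ∈ s, |2 * a m + c m| := by
  have h : ∀ m ∈ s, 2 * |a m| - |c m| ≤ |2 * a m + c m| := fun m _ => by
    cases abs_cases (2 * a m + c m) <;> cases abs_cases (a m) <;> cases abs_cases (c m) <;>
      linarith
  have := Finset.sum_le_sum h
  rw [Finset.sum_sub_distrib, ← Finset.mul_sum] at this
  linarith

noncomputable def haarWavelet (x δ c : ℝ) : ℝ → ℝ :=
  (Ioo x (x + δ)).indicator (fun _ => c) - (Ioo (x + δ) (x + 2 * δ)).indicator (fun _ => c)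

lemma integrable_indicator_Ioo_const (x y c : ℝ) : Integrable ((Ioo x y).indicator fun _ => c) :=
  (integrableOn_const measure_Ioo_lt_top.ne).integrable_indicator measurableSet_Ioo

section haarWavelet

variable (x δ c : ℝ)

lemma integrable_haarWavelet : Integrable (haarWavelet x δ c) :=
  (integrable_indicator_Ioo_const _ _ _).sub (integrable_indicator_Ioo_const _ _ _)

lemma integral_haarWavelet : ∫ t, haarWavelet x δ c t = 0 := by
  simp only [haarWavelet, Pi.sub_apply]
  rw [integral_sub (integrable_indicator_Ioo_const _ _ _)
    (integrable_indicator_Ioo_const _ _ _)]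
  simp only [integral_indicator_const _ measurableSet_Ioo, Real.volume_real_Ioo]
  ring_nf

lemma abs_haarWavelet (t : ℝ) : |haarWavelet x δ c t| =
    (Ioo x (x + δ)).indicator (fun _ => |c|) t +
      (Ioo (x + δ) (x + 2 * δ)).indicator (fun _ => |c|) t := by
  simp only [haarWavelet, Pi.sub_apply, indicator_apply, mem_Ioo]
  split_ifs with h₁ h₂ h₂
  · exact absurd (h₁.2.trans h₂.1) (lt_irrefl _)
  all_goals simp

lemma integral_abs_haarWavelet (hδ : 0 ≤ δ) :
    ∫ t, |haarWavelet x δ c t| = 2 * δ * |c| := by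
  simp only [abs_haarWavelet]
  rw [integral_add (integrable_indicator_Ioo_const _ _ _)
    (integrable_indicator_Ioo_const _ _ _)]
  simp only [integral_indicator_const _ measurableSet_Ioo, smul_eq_mul,
    Real.volume_real_Ioo_of_le (by linarith : x ≤ x + δ),
    Real.volume_real_Ioo_of_le (by linarith : x + δ ≤ x + 2 * δ)]
  ring

lemma haarWavelet_eq_zero_of_notMem {t : ℝ} (ht : t ∉ Ioo x (x + 2 * δ)) :
    haarWavelet x δ c t = 0 := by
  have h₁ : t ∉ Ioo x (x + δ) := fun h => ht ⟨h.1, by linarith [h.1, h.2]⟩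
  have h₂ : t ∉ Ioo (x + δ) (x + 2 * δ) := fun h => ht ⟨by linarith [h.1, h.2], h.2⟩
  simp [haarWavelet, indicator_of_notMem h₁, indicator_of_notMem h₂]

end haarWavelet

lemma haarFun_eq_haarWavelet (j n i : ℕ) :
    haarFun j n i = haarWavelet (j + (2 * i - 2) / 2 ^ (n + 1)) (2 ^ (n + 1))⁻¹ (2 ^ n) := by
  have h₁ : (j + (2 * i - 2) / 2 ^ (n + 1) : ℝ) + (2 ^ (n + 1))⁻¹ =
      j + (2 * i - 1) / 2 ^ (n + 1) := by
    field_simp; ring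
  have h₂ : (j + (2 * i - 2) / 2 ^ (n + 1) : ℝ) + 2 * (2 ^ (n + 1))⁻¹ =
      j + 2 * i / 2 ^ (n + 1) := by
    field_simp; ring
  funext t
  rw [haarWavelet, h₁, h₂]
  simp only [haarFun, Pi.sub_apply, indicator_apply, mem_Ioo]
  split_ifs with ha hb hb
  · exact absurd (ha.2.trans hb.1) (lt_irrefl _)
  all_goals ring

section haarFun

variable (j n i : ℕ)

lemma integrable_haarFun : Integrable (haarFun j n i) := by
  rw [haarFun_eq_haarWavelet]
  exact integrable_haarWavelet _ _ _

lemma integral_haarFun : ∫ t, haarFun j n i t = 0 := by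
  rw [haarFun_eq_haarWavelet]
  exact integral_haarWavelet _ _ _

lemma integral_abs_haarFun : ∫ t, |haarFun j n i t| = 1 := by
  rw [haarFun_eq_haarWavelet, integral_abs_haarWavelet _ _ _ (by positivity),
    abs_of_pos (by positivity), pow_succ]
  field_simp

variable {j n i}

lemma haarFun_eq_zero_of_notMem (hi : 1 ≤ i) (hi' : i ≤ 2 ^ n) {t : ℝ}
    (ht : t ∉ Ioo (j : ℝ) (j + 1)) : haarFun j n i t = 0 := by
  rw [haarFun_eq_haarWavelet]
  refine haarWavelet_eq_zero_of_notMem _ _ _ fun h => ht ⟨?_, ?_⟩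
  · have : (0 : ℝ) ≤ (2 * i - 2) / 2 ^ (n + 1) :=
      div_nonneg (by linarith [(Nat.one_le_cast (α := ℝ)).2 hi]) (by positivity)
    linarith [h.1]
  · have : (2 * i - 2) / 2 ^ (n + 1) + 2 * (2 ^ (n + 1))⁻¹ ≤ (1 : ℝ) := by
      have : (i : ℝ) ≤ 2 ^ n := by exact_mod_cast hi'
      rw [pow_succ]
      field_simp
      linarith
    linarith [h.2]

end haarFun

lemma pairwise_disjoint_Ioo_natCast : Pairwise (Disjoint on fun n : ℕ => Ioo (n : ℝ) (n + 1)) :=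
  fun k l h => by
    simpa using pairwise_disjoint_Ioo_intCast ℝ (Nat.cast_injective.ne h : (k : ℤ) ≠ l)

section UnitCells

variable {f : ℝ → ℝ} {l : ℕ}

lemma setIntegral_Ioi_zero_eq_integral (hf : ∀ t ∉ Ioo (l : ℝ) (l + 1), f t = 0) :
    ∫ t in Ioi 0, f t = ∫ t, f t :=
  setIntegral_eq_integral_of_forall_compl_eq_zero fun t ht =>
    hf t fun h => ht ((Nat.cast_nonneg l).trans_lt h.1)

lemma setIntegral_Ioo_natCast (hf : ∀ t ∉ Ioo (l : ℝ) (l + 1), f t = 0) (k : ℕ) :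
    ∫ t in Ioo (k : ℝ) (k + 1), f t = if k = l then ∫ t, f t else 0 := by
  split_ifs with h
  · subst h
    exact setIntegral_eq_integral_of_forall_compl_eq_zero hf
  · exact setIntegral_eq_zero_of_forall_eq_zero fun t ht =>
      hf t (disjoint_left.1 (pairwise_disjoint_Ioo_natCast h) ht)

end UnitCells

lemma integral_indicator_Ioo_natCast (l : ℕ) :
    ∫ t, (Ioo (l : ℝ) (l + 1)).indicator (1 : ℝ → ℝ) t = 1 := by
  simp [integral_indicator_one measurableSet_Ioo]

noncomputable def bumpFun (e : ℕ ≃ HaarIdx) (π : Equiv.Perm ℕ) (i : ℕ) (t : ℝ) : ℝ :=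
  2 * (Ioo (π i : ℝ) (π i + 1)).indicator 1 t + |haarSeq e i t|

section HaarSystem

variable (e : ℕ ≃ HaarIdx) (π : Equiv.Perm ℕ) (s : Finset ℕ) (a b : ℕ → ℝ)

lemma haarSeq_eq_zero_of_notMem (i : ℕ) :
    ∀ t ∉ Ioo ((e i).1.1 : ℝ) ((e i).1.1 + 1), haarSeq e i t = 0 :=
  fun _ ht => haarFun_eq_zero_of_notMem (e i).2.1 (e i).2.2 ht

lemma abs_haarSeq_eq_zero_of_notMem (i : ℕ) :
    ∀ t ∉ Ioo ((e i).1.1 : ℝ) ((e i).1.1 + 1), |haarSeq e i t| = 0 :=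
  fun t ht => by rw [haarSeq_eq_zero_of_notMem e i t ht, abs_zero]

lemma integrable_haarSeq (i : ℕ) : Integrable (haarSeq e i) :=
  integrable_haarFun _ _ _

lemma integral_abs_haarSeq (i : ℕ) : ∫ t, |haarSeq e i t| = 1 :=
  integral_abs_haarFun _ _ _

lemma integrable_bumpFun (i : ℕ) : Integrable (bumpFun e π i) :=
  ((integrable_indicator_Ioo_const _ _ 1).const_mul 2).add (integrable_haarSeq e i).abs

lemma integrable_sum_mul_bumpFun : Integrable fun t => ∑ i ∈ s, a i * bumpFun e π i t :=
  integrable_finsetSum s fun i _ => (integrable_bumpFun e π i).const_mul (a i)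

lemma integrable_sum_mul_haarSeq : Integrable fun t => ∑ i ∈ s, b i * haarSeq e i t :=
  integrable_finsetSum s fun i _ => (integrable_haarSeq e i).const_mul (b i)

lemma bumpFun_nonneg (i : ℕ) (t : ℝ) : 0 ≤ bumpFun e π i t :=
  add_nonneg (mul_nonneg zero_le_two (indicator_nonneg (fun _ _ => zero_le_one) t))
    (abs_nonneg _)

lemma setIntegral_Ioi_zero_bumpFun (i : ℕ) : ∫ t in Ioi 0, bumpFun e π i t = 3 := by
  simp only [bumpFun]
  rw [integral_add, integral_const_mul,
    setIntegral_Ioi_zero_eq_integral fun _ ht => indicator_of_notMem ht 1,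
    setIntegral_Ioi_zero_eq_integral (abs_haarSeq_eq_zero_of_notMem e i),
    integral_indicator_Ioo_natCast, integral_abs_haarSeq]
  · norm_num
  · exact ((integrable_indicator_Ioo_const _ _ 1).const_mul 2).integrableOn
  · exact (integrable_haarSeq e i).abs.integrableOn

lemma integral_Ioi_zero_abs_sum_bumpFun_le :
    ∫ t in Ioi 0, |∑ i ∈ s, a i * bumpFun e π i t| ≤ 3 * ∑ i ∈ s, |a i| := by
  refine (integral_abs_sum_mul_le s a fun i _ =>
    (integrable_bumpFun e π i).integrableOn).trans_eq ?_
  simp only [abs_of_nonneg (bumpFun_nonneg e π _ _), setIntegral_Ioi_zero_bumpFun, Finset.mul_sum]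
  exact Finset.sum_congr rfl fun _ _ => mul_comm _ _

lemma setIntegral_Ioo_perm_bumpFun (i m : ℕ) :
    ∫ t in Ioo (π m : ℝ) (π m + 1), bumpFun e π i t =
      2 * (if m = i then 1 else 0) + if π m = (e i).1.1 then 1 else 0 := by
  simp only [bumpFun]
  rw [integral_add, integral_const_mul,
    setIntegral_Ioo_natCast fun _ ht => indicator_of_notMem ht 1,
    setIntegral_Ioo_natCast (abs_haarSeq_eq_zero_of_notMem e i),
    integral_indicator_Ioo_natCast, integral_abs_haarSeq]
  · simp only [π.apply_eq_iff_eq]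
  · exact ((integrable_indicator_Ioo_const _ _ 1).const_mul 2).integrableOn
  · exact (integrable_haarSeq e i).abs.integrableOn

lemma setIntegral_Ioo_haarSeq (i k : ℕ) : ∫ t in Ioo (k : ℝ) (k + 1), haarSeq e i t = 0 := by
  rw [setIntegral_Ioo_natCast (haarSeq_eq_zero_of_notMem e i), haarSeq, integral_haarFun,
    ite_self]

lemma setIntegral_Ioo_perm_sum {m : ℕ} (hm : m ∈ s) :
    ∫ t in Ioo (π m : ℝ) (π m + 1),
        (∑ i ∈ s, a i * bumpFun e π i t + ∑ i ∈ s, b i * haarSeq e i t)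
      = 2 * a m + ∑ i ∈ s, if π m = (e i).1.1 then a i else 0 := by
  rw [integral_add (integrable_sum_mul_bumpFun e π s a).integrableOn
      (integrable_sum_mul_haarSeq e s b).integrableOn,
    integral_finsetSum s fun i _ => ((integrable_bumpFun e π i).const_mul (a i)).integrableOn,
    integral_finsetSum s fun i _ => ((integrable_haarSeq e i).const_mul (b i)).integrableOn]
  simp only [integral_const_mul, setIntegral_Ioo_perm_bumpFun, setIntegral_Ioo_haarSeq, mul_zero,
    Finset.sum_const_zero, add_zero, mul_add, Finset.sum_add_distrib, mul_ite, mul_one,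
    Finset.sum_ite_eq, hm, if_true, mul_comm (a m)]

lemma sum_abs_le_integral_Ioi_zero_abs :
    ∑ i ∈ s, |a i| ≤
      ∫ t in Ioi 0, |∑ i ∈ s, a i * bumpFun e π i t + ∑ i ∈ s, b i * haarSeq e i t| := by
  calc ∑ i ∈ s, |a i|
      ≤ ∑ m ∈ s, |2 * a m + ∑ i ∈ s, if π m = (e i).1.1 then a i else 0| :=
        sum_abs_le_sum_abs_two_mul_add s (sum_abs_sum_ite_le s π (fun i => (e i).1.1) a)
    _ = ∑ m ∈ s, |∫ t in Ioo (π m : ℝ) (π m + 1),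
          (∑ i ∈ s, a i * bumpFun e π i t + ∑ i ∈ s, b i * haarSeq e i t)| :=
        Finset.sum_congr rfl fun m hm => by rw [setIntegral_Ioo_perm_sum e π s a b hm]
    _ ≤ _ := sum_abs_setIntegral_le_setIntegral_abs s (fun _ _ => measurableSet_Ioo)
        (fun m _ t ht => (Nat.cast_nonneg (π m)).trans_lt ht.1)
        ((pairwise_disjoint_Ioo_natCast.comp_of_injective π.injective).set_pairwise _)
        (integrable_sum_mul_bumpFun e π s a |>.add (integrable_sum_mul_haarSeq e s b)).integrableOn

end HaarSystem

/-- for all finitely supported scalar sequences `(a_i)`, `(b_i)`,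
`(1/2) ∑ |a_i| + (1/8) ‖∑ b_i h_i‖₁ ≤ ‖∑ a_i (2·1_{(π i, π i + 1)} + |h_i|) + ∑ b_i h_i‖₁
  ≤ 3 ∑ |a_i| + ‖∑ b_i h_i‖₁`, the norms being in `L₁(0,∞)`. -/
theorem stmt0 (e : ℕ ≃ HaarIdx) (π : Equiv.Perm ℕ) (s : Finset ℕ) (a b : ℕ → ℝ) :
    (1 / 2) * ∑ i ∈ s, |a i| +
        (1 / 8) * ∫ t in Set.Ioi (0 : ℝ), |∑ i ∈ s, b i * haarSeq e i t| ≤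
      ∫ t in Set.Ioi (0 : ℝ),
        |∑ i ∈ s, a i * (2 * Set.indicator (Set.Ioo (π i : ℝ) (π i + 1)) 1 t + |haarSeq e i t|)
          + ∑ i ∈ s, b i * haarSeq e i t| ∧
    (∫ t in Set.Ioi (0 : ℝ),
        |∑ i ∈ s, a i * (2 * Set.indicator (Set.Ioo (π i : ℝ) (π i + 1)) 1 t + |haarSeq e i t|)
          + ∑ i ∈ s, b i * haarSeq e i t|) ≤
      3 * ∑ i ∈ s, |a i| + ∫ t in Set.Ioi (0 : ℝ), |∑ i ∈ s, b i * haarSeq e i t| := by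
  have hbump : ∀ i t, 2 * (Ioo (π i : ℝ) (π i + 1)).indicator 1 t + |haarSeq e i t| =
      bumpFun e π i t := fun _ _ => rfl
  simp only [hbump]
  have hf := (integrable_sum_mul_bumpFun e π s a).integrableOn (s := Ioi 0)
  have hg := (integrable_sum_mul_haarSeq e s b).integrableOn (s := Ioi 0)
  have hf_le := integral_Ioi_zero_abs_sum_bumpFun_le e π s a
  have hsum_le := integral_abs_add_le hf hg
  have hg_le := integral_abs_add_le (hf.add hg) hf.neg
  simp only [Pi.add_apply, Pi.neg_apply, abs_neg, add_neg_cancel_comm] at hg_le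
  have ha_le := sum_abs_le_integral_Ioi_zero_abs e π s a b
  constructor <;> linarith
end

section
/- Suppose the enumeration {h_i} satisfies h_1 = h_{0,1}^1 (the first mean-zero Haar function on (0,1)), and the permutation π of ℕ satisfies π(1) = 1 and, for every i > 1, if h_i = h_{n,k}^j then π(i) > j (so that for i > 1 the support of h_i is disjoint from (π(i)−1, π(i))). Set x_i = 2·1_{(π(i)−1,π(i))} + |h_i| + h_i and y_i = 2·1_{(π(i)−1,π(i))} + |h_i| − h_i. Then the closed linear span of {x_i, y_i : i ∈ ℕ} is all of L1(0,∞). -/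
/-!
Half the difference `x_i - y_i` is the Haar function `h_i`, so every Haar function lies in the
closed span `V`. Half the sum is `2·1_{(π(i)-1, π(i))} + |h_i|`, and `|h_i|` is a multiple of the
indicator of the dyadic support of `h_i`, which lies in an earlier unit interval `(j-1, j)`,
`j < π(i)`. Once `1_{(j-1, j)} ∈ V`, the Haar functions on `(j-1, j)` split it into all of its
dyadic subintervals. So by strong induction every unit interval indicator lies in `V` (the first
one because `x_1 + y_1 = 6·1_{(0,1)}`), hence every dyadic step function, by continuity the
indicators of all intervals `(0, c]`, by a monotone class argument those of all sets of finite
measure, and therefore `V = L¹(0,∞)`.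
-/

open MeasureTheory Filter Topology

open Set Function
open scoped ENNReal symmDiff

section IndicatorMem

variable {α : Type*} [MeasurableSpace α] {μ : Measure α} {p : ℝ≥0∞}

def IndicatorMem (V : Submodule ℝ (Lp ℝ p μ)) (s : Set α) : Prop :=
  ∃ (hs : MeasurableSet s) (hμs : μ s ≠ ∞), indicatorConstLp p hs hμs (1 : ℝ) ∈ V

namespace IndicatorMem

variable {V : Submodule ℝ (Lp ℝ p μ)} {s t : Set α}

lemma empty : IndicatorMem V (∅ : Set α) :=
  ⟨.empty, by simp, by simp [V.zero_mem]⟩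

lemma congr_ae (h : IndicatorMem V s) (ht : MeasurableSet t) (hst : s =ᵐ[μ] t) :
    IndicatorMem V t := by
  obtain ⟨hs, hμs, hsV⟩ := h
  have hμt : μ t ≠ ∞ := by rwa [← measure_congr hst]
  exact ⟨ht, hμt,
    (indicatorConstLp_inj hs hμs ht hμt (one_ne_zero (α := ℝ))).2 hst ▸ hsV⟩

lemma union (hs : IndicatorMem V s) (ht : IndicatorMem V t) (hst : Disjoint s t) :
    IndicatorMem V (s ∪ t) := by
  obtain ⟨hs, hμs, hsV⟩ := hs
  obtain ⟨ht, hμt, htV⟩ := ht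
  refine ⟨hs.union ht, measure_union_ne_top hμs hμt, ?_⟩
  rw [indicatorConstLp_disjoint_union hs ht hμs hμt hst]
  exact V.add_mem hsV htV

lemma diff (hs : IndicatorMem V s) (ht : IndicatorMem V t) (hts : t ⊆ s) :
    IndicatorMem V (s \ t) := by
  obtain ⟨hs, hμs, hsV⟩ := hs
  obtain ⟨ht, hμt, htV⟩ := ht
  have hμst : μ (s \ t) ≠ ∞ := ne_top_of_le_ne_top hμs (measure_mono sdiff_subset)
  have hsplit := indicatorConstLp_disjoint_union (p := p) ht (hs.diff ht) hμt hμst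
    disjoint_sdiff_right (1 : ℝ)
  simp only [union_sdiff_cancel hts] at hsplit
  refine ⟨hs.diff ht, hμst, ?_⟩
  rw [eq_sub_of_add_eq' hsplit.symm]
  exact V.sub_mem hsV htV

variable [Fact (1 ≤ p)]

lemma of_tendsto (hp : p ≠ ∞) (hV : IsClosed (V : Set (Lp ℝ p μ))) {ι : Type*}
    {l : Filter ι} [l.NeBot] {t : ι → Set α} (ht : ∀ i, IndicatorMem V (t i)) (hs : MeasurableSet s)
    (hμs : μ s ≠ ∞) (hlim : Tendsto (fun i ↦ μ (t i ∆ s)) l (𝓝 0)) : IndicatorMem V s := by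
  choose _ _ htV using ht
  exact ⟨hs, hμs, hV.mem_of_tendsto (tendsto_indicatorConstLp_set hp hlim) (.of_forall htV)⟩

lemma iUnion_of_monotone (hp : p ≠ ∞) (hV : IsClosed (V : Set (Lp ℝ p μ)))
    {t : ℕ → Set α} (hmono : Monotone t) (ht : ∀ n, IndicatorMem V (t n)) (hμ : μ (⋃ n, t n) ≠ ∞) :
    IndicatorMem V (⋃ n, t n) := by
  refine of_tendsto (l := atTop) hp hV ht (.iUnion fun n ↦ (ht n).1) hμ ?_
  have hdiff : ∀ n, μ (t n ∆ ⋃ n, t n) = μ (⋃ n, t n) - μ (t n) := fun n ↦ by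
    rw [symmDiff_of_le (subset_iUnion t n),
      measure_sdiff (subset_iUnion t n) (ht n).1.nullMeasurableSet (ht n).2.1]
  simp_rw [hdiff]
  simpa using ENNReal.Tendsto.sub tendsto_const_nhds
    (tendsto_measure_iUnion_atTop (μ := μ) hmono) (.inl hμ)

lemma inter_of_isPiSystem (hp : p ≠ ∞) (hV : IsClosed (V : Set (Lp ℝ p μ)))
    {S : Set (Set α)} (h_gen : ‹MeasurableSpace α› = .generateFrom S) (h_pi : IsPiSystem S)
    {W : Set α} (hW : IndicatorMem V W) (hS : ∀ t ∈ S, IndicatorMem V (t ∩ W))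
    (hs : MeasurableSet s) : IndicatorMem V (s ∩ W) := by
  induction s, hs using MeasurableSpace.induction_on_inter h_gen h_pi with
  | empty => simpa using empty
  | basic t ht => exact hS t ht
  | compl t _ ht =>
    rw [← sdiff_eq_compl_inter, ← sdiff_inter_self_eq_sdiff]
    exact hW.diff ht inter_subset_right
  | iUnion f hdisj _ hf =>
    have hdisjW : Pairwise (Disjoint on fun i ↦ f i ∩ W) :=
      hdisj.mono fun _ _ h ↦ h.mono inter_subset_left inter_subset_left
    have hacc : ∀ n, IndicatorMem V (accumulate (fun i ↦ f i ∩ W) n) := by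
      intro n
      induction n with
      | zero => simpa [accumulate_zero_nat] using hf 0
      | succ n ih =>
        rw [accumulate_succ]
        exact ih.union (hf (n + 1)) (disjoint_accumulate hdisjW n.lt_succ_self)
    rw [iUnion_inter, ← iUnion_accumulate]
    refine iUnion_of_monotone hp hV monotone_accumulate hacc ?_
    rw [iUnion_accumulate, ← iUnion_inter]
    exact ne_top_of_le_ne_top hW.2.1 (measure_mono inter_subset_right)

end IndicatorMem

theorem Lp.submodule_eq_top_of_indicatorMem [Fact (1 ≤ p)] (hp : p ≠ ∞)
    {V : Submodule ℝ (Lp ℝ p μ)} (hV : IsClosed (V : Set (Lp ℝ p μ)))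
    (h : ∀ s, MeasurableSet s → μ s ≠ ∞ → IndicatorMem V s) : V = ⊤ := by
  refine Submodule.eq_top_iff'.2 fun f ↦
    Lp.induction hp (· ∈ V) (fun c s hs hμs ↦ ?_) (fun _ _ _ _ _ ↦ V.add_mem) hV f
  have hsmul :
      indicatorConstLp p hs hμs.ne c = c • indicatorConstLp p hs hμs.ne (1 : ℝ) := by
    refine Lp.ext ?_
    filter_upwards [indicatorConstLp_coeFn (p := p) (hs := hs) (hμs := hμs.ne) (c := c),
      indicatorConstLp_coeFn (p := p) (hs := hs) (hμs := hμs.ne) (c := (1 : ℝ)),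
      Lp.coeFn_smul c (indicatorConstLp p hs hμs.ne (1 : ℝ))] with x hc h1 hsm
    rw [hc, hsm, Pi.smul_apply, h1]
    by_cases hx : x ∈ s <;> simp [hx]
  rw [Lp.simpleFunc.coe_indicatorConst, hsmul]
  exact V.smul_mem c (h s hs hμs.ne).2.2

end IndicatorMem

local notation "μ₀" => volume.restrict (Ioi (0 : ℝ))

section HalfLine

variable {p : ℝ≥0∞} [Fact (1 ≤ p)] {V : Submodule ℝ (Lp ℝ p μ₀)}

theorem Lp.submodule_eq_top_of_indicatorMem_Ioc (hp : p ≠ ∞)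
    (hV : IsClosed (V : Set (Lp ℝ p μ₀))) (h : ∀ c : ℝ, IndicatorMem V (Ioc 0 c)) : V = ⊤ := by
  refine Lp.submodule_eq_top_of_indicatorMem hp hV fun s hs hμs ↦ ?_
  have hgen : (inferInstance : MeasurableSpace ℝ) = .generateFrom (range Iic) :=
    BorelSpace.measurable_eq.trans (borel_eq_generateFrom_Iic ℝ)
  have htrunc : ∀ N : ℕ, IndicatorMem V (s ∩ Ioc 0 N) := fun N ↦
    IndicatorMem.inter_of_isPiSystem hp hV hgen isPiSystem_Iic (h N)
      (by rintro _ ⟨b, rfl⟩; rw [inter_comm, Ioc_inter_Iic]; exact h _) hs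
  have hmono : Monotone fun N : ℕ ↦ s ∩ Ioc 0 (N : ℝ) := fun M N hMN ↦
    inter_subset_inter_right s (Ioc_subset_Ioc_right (by exact_mod_cast hMN))
  refine (IndicatorMem.iUnion_of_monotone hp hV hmono htrunc
    (ne_top_of_le_ne_top hμs (measure_mono (iUnion_subset fun _ ↦ inter_subset_left)))).congr_ae
    hs ?_
  filter_upwards [ae_restrict_mem measurableSet_Ioi] with x hx
  change (x ∈ ⋃ N : ℕ, s ∩ Ioc 0 (N : ℝ)) = (x ∈ s)
  simp only [mem_iUnion, mem_inter_iff, mem_Ioc, eq_iff_iff]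
  exact ⟨fun ⟨_, hxs, _⟩ ↦ hxs, fun hxs ↦ ⟨⌈x⌉₊, hxs, hx, Nat.le_ceil x⟩⟩

theorem indicatorMem_Ioc_of_dyadic (hp : p ≠ ∞) (hV : IsClosed (V : Set (Lp ℝ p μ₀)))
    (h : ∀ n k : ℕ, IndicatorMem V (Ioc 0 ((k : ℝ) / 2 ^ n))) (c : ℝ) :
    IndicatorMem V (Ioc 0 c) := by
  rcases lt_or_ge c 0 with hc | hc
  · rw [Ioc_eq_empty (not_lt.2 hc.le)]
    exact .empty
  set c' : ℕ → ℝ := fun n ↦ ⌊c * 2 ^ n⌋₊ / 2 ^ n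
  have hc'c : ∀ n, c' n ≤ c := fun n ↦
    (div_le_iff₀ (by positivity)).2 (Nat.floor_le (by positivity))
  have hlim : Tendsto c' atTop (𝓝 c) :=
    (tendsto_nat_floor_mul_div_atTop hc).comp (tendsto_pow_atTop_atTop_of_one_lt one_lt_two)
  refine IndicatorMem.of_tendsto (l := atTop) hp hV (fun n ↦ h n ⌊c * 2 ^ n⌋₊)
    measurableSet_Ioc measure_Ioc_lt_top.ne ?_
  have hbound : ∀ n, μ₀ (Ioc 0 (c' n) ∆ Ioc 0 c) ≤ ENNReal.ofReal (c - c' n) := by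
    intro n
    rw [symmDiff_of_le (Ioc_subset_Ioc_right (hc'c n)), ← Real.volume_Ioc]
    exact (Measure.restrict_le_self _).trans
      (measure_mono fun x hx ↦ ⟨not_le.1 fun h ↦ hx.2 ⟨hx.1.1, h⟩, hx.1.2⟩)
  have hlim' : Tendsto (fun n ↦ ENNReal.ofReal (c - c' n)) atTop (𝓝 0) := by
    simpa using ENNReal.tendsto_ofReal ((tendsto_const_nhds (x := c)).sub hlim)
  exact tendsto_of_tendsto_of_tendsto_of_le_of_le tendsto_const_nhds hlim' (fun _ ↦ bot_le)
    hbound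

end HalfLine

/-- Half-open, so that the dyadic intervals of each level partition `(0, ∞)` exactly; the
open intervals in `haarFun` agree with them up to endpoints. -/
noncomputable def dyadicIoc (n k : ℕ) : Set ℝ := Ioc (k / 2 ^ n) ((k + 1) / 2 ^ n)

lemma dyadicIoc_eq_union (n k : ℕ) :
    dyadicIoc n k = dyadicIoc (n + 1) (2 * k) ∪ dyadicIoc (n + 1) (2 * k + 1) := by
  have hhalf : ∀ a : ℝ, 2 * a / 2 ^ (n + 1) = a / 2 ^ n := fun a ↦ by
    rw [pow_succ]; field_simp
  have hl : ((2 * k : ℕ) : ℝ) / 2 ^ (n + 1) = k / 2 ^ n := by push_cast; exact hhalf k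
  have hr : (((2 * k + 1 : ℕ) : ℝ) + 1) / 2 ^ (n + 1) = (k + 1) / 2 ^ n := by
    rw [← hhalf]; push_cast; ring_nf
  have hm : ((2 * k : ℕ) : ℝ) + 1 = ((2 * k + 1 : ℕ) : ℝ) := by push_cast; ring
  simp only [dyadicIoc]
  rw [hl, hr, hm, Ioc_union_Ioc_eq_Ioc]
  · rw [← hl]; gcongr; linarith
  · rw [← hr]; gcongr; linarith

lemma disjoint_dyadicIoc_succ (n k : ℕ) :
    Disjoint (dyadicIoc (n + 1) (2 * k)) (dyadicIoc (n + 1) (2 * k + 1)) :=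
  Ioc_disjoint_Ioc_of_le (by push_cast; rfl)

section DyadicLp

variable (p : ℝ≥0∞)

noncomputable def dyadicLp (n k : ℕ) : Lp ℝ p μ₀ :=
  indicatorConstLp (s := dyadicIoc n k) p measurableSet_Ioc measure_Ioc_lt_top.ne 1

/-- The Haar function supported on `dyadicIoc n k`, normalized in sup norm: the `L¹`-normalized
one is `2 ^ n • haarLp p n k`. -/
noncomputable def haarLp (n k : ℕ) : Lp ℝ p μ₀ :=
  dyadicLp p (n + 1) (2 * k) - dyadicLp p (n + 1) (2 * k + 1)

lemma dyadicLp_eq_add (n k : ℕ) :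
    dyadicLp p n k = dyadicLp p (n + 1) (2 * k) + dyadicLp p (n + 1) (2 * k + 1) := by
  have h := indicatorConstLp_disjoint_union (p := p) (μ := μ₀)
    (s := dyadicIoc (n + 1) (2 * k)) (t := dyadicIoc (n + 1) (2 * k + 1))
    measurableSet_Ioc measurableSet_Ioc measure_Ioc_lt_top.ne measure_Ioc_lt_top.ne
    (disjoint_dyadicIoc_succ n k) (1 : ℝ)
  simp only [← dyadicIoc_eq_union] at h
  exact h

variable {p} {V : Submodule ℝ (Lp ℝ p μ₀)}

lemma dyadicLp_mem_of_haarLp_mem (hH : ∀ n k, haarLp p n k ∈ V) :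
    ∀ n k, dyadicLp p 0 (k / 2 ^ n) ∈ V → dyadicLp p n k ∈ V := by
  intro n
  induction n with
  | zero => simp
  | succ n ih =>
    intro k hk
    obtain ⟨r, hr⟩ := Nat.even_or_odd' k
    have hparent : dyadicLp p n r ∈ V := ih r (by
      rwa [pow_succ', ← Nat.div_div_eq_div_mul, show k / 2 = r by omega] at hk)
    rcases hr with rfl | rfl
    · convert V.smul_mem (2 : ℝ)⁻¹ (V.add_mem hparent (hH n r)) using 1
      rw [dyadicLp_eq_add p n r, haarLp]
      module
    · convert V.smul_mem (2 : ℝ)⁻¹ (V.sub_mem hparent (hH n r)) using 1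
      rw [dyadicLp_eq_add p n r, haarLp]
      module

lemma indicatorMem_Ioc_zero_of_dyadicLp_mem (n : ℕ) (hD : ∀ k, dyadicLp p n k ∈ V) :
    ∀ k : ℕ, IndicatorMem V (Ioc 0 ((k : ℝ) / 2 ^ n))
  | 0 => by simpa using IndicatorMem.empty
  | k + 1 => by
    have hsplit :
        Ioc 0 (((k + 1 : ℕ) : ℝ) / 2 ^ n) = Ioc 0 ((k : ℝ) / 2 ^ n) ∪ dyadicIoc n k := by
      rw [dyadicIoc, Ioc_union_Ioc_eq_Ioc (by positivity) (by gcongr; simp)]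
      push_cast
      rfl
    rw [hsplit]
    exact (indicatorMem_Ioc_zero_of_dyadicLp_mem n hD k).union
      ⟨measurableSet_Ioc, measure_Ioc_lt_top.ne, hD k⟩ (Ioc_disjoint_Ioc_of_le le_rfl)

/-- `w m` is the (level, position) of the Haar function paired with the unit interval
`(m, m + 1)`. -/
lemma dyadicLp_zero_mem_of_haarLp_mem
    (hH : ∀ n k, haarLp p n k ∈ V) (w : ℕ → ℕ × ℕ)
    (hw : ∀ m, (4 : ℝ) • dyadicLp p 0 m + (2 ^ ((w m).1 + 1) : ℝ) • dyadicLp p (w m).1 (w m).2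
      ∈ V)
    (hw0 : w 0 = (0, 0)) (hlt : ∀ m, 0 < m → (w m).2 / 2 ^ (w m).1 < m) :
    ∀ m, dyadicLp p 0 m ∈ V := by
  intro m
  induction m using Nat.strong_induction_on with
  | _ m ih =>
    rcases Nat.eq_zero_or_pos m with rfl | hm
    · have h := hw 0
      rw [hw0, ← add_smul] at h
      exact (V.smul_mem_iff (by norm_num)).1 h
    · have hD := dyadicLp_mem_of_haarLp_mem hH _ _ (ih _ (hlt m hm))
      have h := V.sub_mem (hw m) (V.smul_mem (2 ^ ((w m).1 + 1) : ℝ) hD)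
      rw [add_sub_cancel_right] at h
      exact (V.smul_mem_iff (by norm_num)).1 h

end DyadicLp

lemma haarFun_eq_of_ne {j n k q : ℕ} (hq : q + 1 = j * 2 ^ n + k) {t : ℝ}
    (hM : t ≠ (2 * q + 1) / 2 ^ (n + 1)) (hR : t ≠ (2 * q + 1 + 1) / 2 ^ (n + 1)) :
    haarFun j n k t = 2 ^ n * ((dyadicIoc (n + 1) (2 * q)).indicator 1 t
      - (dyadicIoc (n + 1) (2 * q + 1)).indicator 1 t) := by
  have hq' : (q : ℝ) + 1 = j * 2 ^ n + k := by exact_mod_cast hq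
  have hshift :
      ∀ a b : ℝ, a + 2 * j * 2 ^ n = b → (j : ℝ) + a / 2 ^ (n + 1) = b / 2 ^ (n + 1) :=
    fun a b h ↦ by rw [← h, pow_succ]; field_simp; ring
  have hLM : 2 * (q : ℝ) / 2 ^ (n + 1) < (2 * q + 1) / 2 ^ (n + 1) := by gcongr; linarith
  have hMR : (2 * (q : ℝ) + 1) / 2 ^ (n + 1) < (2 * q + 1 + 1) / 2 ^ (n + 1) := by
    gcongr; linarith
  unfold haarFun dyadicIoc
  rw [hshift _ (2 * q) (by linear_combination -2 * hq'),
    hshift _ (2 * q + 1) (by linear_combination -2 * hq'),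
    hshift _ (2 * q + 1 + 1) (by linear_combination -2 * hq')]
  simp only [indicator, mem_Ioc, Pi.one_apply]
  push_cast
  generalize 2 * (q : ℝ) / 2 ^ (n + 1) = L at *
  generalize (2 * (q : ℝ) + 1) / 2 ^ (n + 1) = M at *
  generalize (2 * (q : ℝ) + 1 + 1) / 2 ^ (n + 1) = R at *
  split_ifs <;> grind

lemma abs_haarFun_eq_of_ne {j n k q : ℕ} (hq : q + 1 = j * 2 ^ n + k) {t : ℝ}
    (hM : t ≠ (2 * q + 1) / 2 ^ (n + 1)) (hR : t ≠ (2 * q + 1 + 1) / 2 ^ (n + 1)) :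
    |haarFun j n k t| = 2 ^ n * (dyadicIoc n q).indicator 1 t := by
  rw [haarFun_eq_of_ne hq hM hR, dyadicIoc_eq_union n q,
    indicator_union_of_disjoint (disjoint_dyadicIoc_succ n q)]
  by_cases h1 : t ∈ dyadicIoc (n + 1) (2 * q)
  · simp [h1, (disjoint_dyadicIoc_succ n q).notMem_of_mem_left h1]
  · by_cases h2 : t ∈ dyadicIoc (n + 1) (2 * q + 1) <;> simp [h1, h2]

lemma indicator_Ioo_eq_dyadicIoc_zero {m : ℕ} {t : ℝ} (ht : t ≠ m + 1) :
    (Ioo (m : ℝ) (m + 1)).indicator 1 t = (dyadicIoc 0 m).indicator (1 : ℝ → ℝ) t := by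
  simp only [dyadicIoc, pow_zero, div_one, indicator, mem_Ioo, mem_Ioc]
  split_ifs <;> grind

theorem sub_eq_smul_haarLp_and_add_eq {p : ℝ≥0∞} {x y : Lp ℝ p μ₀} {m j n k q : ℕ}
    (hq : q + 1 = j * 2 ^ n + k)
    (hx : ⇑x =ᵐ[μ₀] fun t ↦
      2 * (Ioo (m : ℝ) (m + 1)).indicator 1 t + |haarFun j n k t| + haarFun j n k t)
    (hy : ⇑y =ᵐ[μ₀] fun t ↦
      2 * (Ioo (m : ℝ) (m + 1)).indicator 1 t + |haarFun j n k t| - haarFun j n k t) :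
    x - y = (2 ^ (n + 1) : ℝ) • haarLp p n q ∧
      x + y = (4 : ℝ) • dyadicLp p 0 m + (2 ^ (n + 1) : ℝ) • dyadicLp p n q := by
  have hpts : ∀ᵐ t ∂μ₀,
      t ∉ ({(2 * (q : ℝ) + 1) / 2 ^ (n + 1), (2 * (q : ℝ) + 1 + 1) / 2 ^ (n + 1),
        (m : ℝ) + 1} : Set ℝ) :=
    (toFinite _).countable.ae_notMem _
  have hD : ∀ n k, ⇑(dyadicLp p n k) =ᵐ[μ₀] (dyadicIoc n k).indicator 1 :=
    fun _ _ ↦ indicatorConstLp_coeFn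
  constructor <;> refine Lp.ext ?_
  · filter_upwards [hx, hy, hpts, Lp.coeFn_sub x y,
      Lp.coeFn_smul (2 ^ (n + 1) : ℝ) (haarLp p n q),
      Lp.coeFn_sub (dyadicLp p (n + 1) (2 * q)) (dyadicLp p (n + 1) (2 * q + 1)),
      hD (n + 1) (2 * q), hD (n + 1) (2 * q + 1)] with t hxt hyt ht hsub hsmul hH hD1 hD2
    simp only [mem_insert_iff, mem_singleton_iff, not_or] at ht
    rw [hsub, hsmul, Pi.sub_apply, hxt, hyt, Pi.smul_apply, haarLp, hH, Pi.sub_apply, hD1, hD2,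
      haarFun_eq_of_ne hq ht.1 ht.2.1, pow_succ]
    simp only [smul_eq_mul]
    ring
  · filter_upwards [hx, hy, hpts, Lp.coeFn_add x y,
      Lp.coeFn_add ((4 : ℝ) • dyadicLp p 0 m) ((2 ^ (n + 1) : ℝ) • dyadicLp p n q),
      Lp.coeFn_smul (4 : ℝ) (dyadicLp p 0 m), Lp.coeFn_smul (2 ^ (n + 1) : ℝ) (dyadicLp p n q),
      hD 0 m, hD n q] with t hxt hyt ht hadd hadd' hsmul hsmul' hD0 hDn
    simp only [mem_insert_iff, mem_singleton_iff, not_or] at ht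
    rw [hadd, hadd', Pi.add_apply, Pi.add_apply, hxt, hyt, hsmul, hsmul', Pi.smul_apply,
      Pi.smul_apply, hD0, hDn, abs_haarFun_eq_of_ne hq ht.1 ht.2.1,
      indicator_Ioo_eq_dyadicIoc_zero ht.2.2, pow_succ]
    simp only [smul_eq_mul]
    ring

namespace HaarIdx

/-- The Haar function with index `(j, n, k)` is supported on `dyadicIoc n (pos (j, n, k))`. -/
def pos (a : HaarIdx) : ℕ := a.1.1 * 2 ^ a.1.2.1 + a.1.2.2 - 1

lemma pos_add_one (a : HaarIdx) : a.pos + 1 = a.1.1 * 2 ^ a.1.2.1 + a.1.2.2 := by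
  have := a.2.1
  unfold pos
  omega

lemma pos_div_two_pow (a : HaarIdx) : a.pos / 2 ^ a.1.2.1 = a.1.1 := by
  obtain ⟨⟨j, n, k⟩, hk1, hk2⟩ := a
  dsimp only at hk1 hk2
  simp only [pos]
  rw [show j * 2 ^ n + k - 1 = (k - 1) + 2 ^ n * j by rw [mul_comm]; omega,
    Nat.add_mul_div_left _ _ (by positivity), Nat.div_eq_of_lt (by omega), zero_add]

def ofPos (n q : ℕ) : HaarIdx :=
  ⟨(q / 2 ^ n, n, q % 2 ^ n + 1), Nat.le_add_left 1 _, Nat.mod_lt q (by positivity)⟩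

lemma pos_ofPos (n q : ℕ) : (ofPos n q).pos = q := by
  simp only [pos, ofPos]
  have := Nat.div_add_mod' q (2 ^ n)
  omega

end HaarIdx

/-- suppose the enumeration starts with the first mean zero Haar function on
`(0,1)` (i.e. `e 0 = (0, 0, 1)`), the permutation `π` satisfies `π 0 = 0` and, for `i > 0`,
if `h_i` lives on the interval `(j, j+1)` then `π i > j` (so the support of `h_i` is disjoint
from `(π i, π i + 1)`).  With `x_i = 2·1_{(π i, π i + 1)} + |h_i| + h_i` and
`y_i = 2·1_{(π i, π i + 1)} + |h_i| - h_i` (as elements `X i`, `Y i` of `L₁(0,∞)`), the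
closed linear span of `{x_i, y_i}` is all of `L₁(0,∞)`. -/
theorem stmt5 (e : ℕ ≃ HaarIdx) (π : Equiv.Perm ℕ)
    (he : (e 0).1 = (0, 0, 1))
    (hπ0 : π 0 = 0)
    (hπ : ∀ i : ℕ, 0 < i → (e i).1.1 < π i)
    (X Y : ℕ → Lp ℝ 1 (volume.restrict (Set.Ioi (0 : ℝ))))
    (hX : ∀ i, ⇑(X i) =ᵐ[volume.restrict (Set.Ioi (0 : ℝ))] fun t =>
      2 * Set.indicator (Set.Ioo (π i : ℝ) (π i + 1)) 1 t + |haarSeq e i t| + haarSeq e i t)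
    (hY : ∀ i, ⇑(Y i) =ᵐ[volume.restrict (Set.Ioi (0 : ℝ))] fun t =>
      2 * Set.indicator (Set.Ioo (π i : ℝ) (π i + 1)) 1 t + |haarSeq e i t| - haarSeq e i t) :
    (Submodule.span ℝ (Set.range X ∪ Set.range Y)).topologicalClosure = ⊤ := by
  set V := (Submodule.span ℝ (range X ∪ range Y)).topologicalClosure
  have hV : IsClosed (V : Set (Lp ℝ 1 μ₀)) := Submodule.isClosed_topologicalClosure _
  have hXYV : ∀ i, X i ∈ V ∧ Y i ∈ V := fun i ↦
    ⟨Submodule.le_topologicalClosure _ (Submodule.subset_span (.inl ⟨i, rfl⟩)),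
      Submodule.le_topologicalClosure _ (Submodule.subset_span (.inr ⟨i, rfl⟩))⟩
  have hXY := fun i ↦ sub_eq_smul_haarLp_and_add_eq (e i).pos_add_one (hX i) (hY i)
  have hH : ∀ n q, haarLp 1 n q ∈ V := fun n q ↦ by
    have h := (hXY (e.symm (.ofPos n q))).1
    rw [e.apply_symm_apply, HaarIdx.pos_ofPos] at h
    exact (V.smul_mem_iff (by positivity)).1 (h ▸ V.sub_mem (hXYV _).1 (hXYV _).2)
  have hπ0' : π.symm 0 = 0 := by rw [Equiv.symm_apply_eq, hπ0]
  have hunit := dyadicLp_zero_mem_of_haarLp_mem hH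
    (fun m ↦ ((e (π.symm m)).1.2.1, (e (π.symm m)).pos))
    (fun m ↦ by
      have h := (hXY (π.symm m)).2
      rw [π.apply_symm_apply] at h
      exact h ▸ V.add_mem (hXYV _).1 (hXYV _).2)
    (by simp [hπ0', HaarIdx.pos, he])
    (fun m hm ↦ by
      have hi : 0 < π.symm m :=
        Nat.pos_of_ne_zero fun h ↦ hm.ne' (by simpa [hπ0] using congrArg π h)
      simpa [HaarIdx.pos_div_two_pow] using hπ _ hi)
  exact Lp.submodule_eq_top_of_indicatorMem_Ioc ENNReal.one_ne_top hV
    (indicatorMem_Ioc_of_dyadic ENNReal.one_ne_top hV fun n ↦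
      indicatorMem_Ioc_zero_of_dyadicLp_mem n fun q ↦ dyadicLp_mem_of_haarLp_mem hH n q (hunit _))
end

section
/- Let 1 ≤ p ≤ 2 and let (x_n) be a sequence in L_p(0,∞) with ‖x_n‖_p = 1 and x_n ≥ 0 a.e. for every n, and suppose (x_n) is K-unconditional. Then for every finitely supported scalar sequence (a_n), K^{−1} ‖∑_n a_n x_n‖_p ≤ (∑_n |a_n|^p)^{1/p} ≤ K ‖∑_n a_n x_n‖_p. -/
open MeasureTheory Filter Topology ENNReal

/-!
Upper bound: `t ↦ t ^ p` is superadditive on `[0, ∞)`, so for non-negative `x_n`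
`∑ |a_n| ^ p = ∑ ‖|a_n| x_n‖ ^ p ≤ ‖∑ |a_n| x_n‖ ^ p`, and unconditionality replaces `|a_n|`
by `a_n`.

Lower bound: for `p ≤ 2` the scalar inequality
`|x + y| ^ p + |x - y| ^ p ≤ 2 (|x| ^ p + |y| ^ p)` (concavity of `t ↦ t ^ (p/2)`) integrates
to the same inequality in `L_p`, so one of the two signs satisfies
`‖u ± w‖ ^ p ≤ ‖u‖ ^ p + ‖w‖ ^ p`. Choosing signs greedily gives `ε` with
`‖∑ ε_n a_n x_n‖ ^ p ≤ ∑ |a_n| ^ p`, and unconditionality removes the signs.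
-/

theorem abs_add_rpow_add_abs_sub_rpow_le {q : ℝ} (hq₀ : 0 ≤ q) (hq₂ : q ≤ 2) (x y : ℝ) :
    |x + y| ^ q + |x - y| ^ q ≤ 2 * (|x| ^ q + |y| ^ q) := by
  have hr₀ : 0 ≤ q / 2 := by positivity
  have hr₁ : q / 2 ≤ 1 := by linarith
  have hsq : ∀ t : ℝ, |t| ^ q = (t ^ 2) ^ (q / 2) := fun t => by
    rw [← sq_abs, ← Real.rpow_natCast, ← Real.rpow_mul (abs_nonneg t)]
    congr 1
    ring
  have hmid := (Real.concaveOn_rpow hr₀ hr₁).2 (sq_nonneg (x + y)) (sq_nonneg (x - y))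
    (by norm_num : (0 : ℝ) ≤ 1 / 2) (by norm_num : (0 : ℝ) ≤ 1 / 2) (by norm_num)
  have hsub := Real.rpow_add_le_add_rpow (sq_nonneg x) (sq_nonneg y) hr₀ hr₁
  simp only [smul_eq_mul] at hmid
  rw [show 1 / 2 * (x + y) ^ 2 + 1 / 2 * (x - y) ^ 2 = x ^ 2 + y ^ 2 by ring] at hmid
  simp only [hsq]
  linarith

theorem ite_nonneg_mul_eq_abs (a : ℝ) : (if 0 ≤ a then 1 else -1) * a = |a| := by
  split_ifs with h
  · rw [one_mul, abs_of_nonneg h]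
  · rw [neg_one_mul, abs_of_neg (not_le.1 h)]

section Signs

variable {E : Type*} [SeminormedAddCommGroup E] [NormedSpace ℝ E] {q : ℝ}

theorem exists_sign_norm_add_smul_rpow_le
    (hE : ∀ u w : E, ‖u + w‖ ^ q + ‖u - w‖ ^ q ≤ 2 * (‖u‖ ^ q + ‖w‖ ^ q)) (u w : E) :
    ∃ c : ℝ, (c = 1 ∨ c = -1) ∧ ‖u + c • w‖ ^ q ≤ ‖u‖ ^ q + ‖w‖ ^ q := by
  rcases le_total (‖u + w‖ ^ q) (‖u - w‖ ^ q) with h | h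
  · exact ⟨1, Or.inl rfl, by rw [one_smul]; linarith [hE u w]⟩
  · exact ⟨-1, Or.inr rfl, by rw [neg_one_smul, ← sub_eq_add_neg]; linarith [hE u w]⟩

theorem exists_signs_norm_sum_smul_rpow_le (hq : 0 < q)
    (hE : ∀ u w : E, ‖u + w‖ ^ q + ‖u - w‖ ^ q ≤ 2 * (‖u‖ ^ q + ‖w‖ ^ q))
    {ι : Type*} (s : Finset ι) (v : ι → E) :
    ∃ ε : ι → ℝ, (∀ i, ε i = 1 ∨ ε i = -1) ∧
      ‖∑ i ∈ s, ε i • v i‖ ^ q ≤ ∑ i ∈ s, ‖v i‖ ^ q := by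
  classical
  induction s using Finset.induction_on with
  | empty => exact ⟨fun _ => 1, fun _ => Or.inl rfl, by simp [Real.zero_rpow hq.ne']⟩
  | insert k t hk ih =>
    obtain ⟨ε, hε, hle⟩ := ih
    obtain ⟨c, hc, hstep⟩ := exists_sign_norm_add_smul_rpow_le hE (∑ i ∈ t, ε i • v i) (v k)
    refine ⟨Function.update ε k c, fun i => ?_, ?_⟩
    · rcases eq_or_ne i k with rfl | hi
      · simpa using hc
      · simpa [Function.update_of_ne hi] using hε i
    have hrest : ∑ i ∈ t, Function.update ε k c i • v i = ∑ i ∈ t, ε i • v i :=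
      Finset.sum_congr rfl fun i hi => by
        rw [Function.update_of_ne (ne_of_mem_of_not_mem hi hk)]
    rw [Finset.sum_insert hk, Finset.sum_insert hk, hrest, Function.update_self, add_comm]
    linarith

end Signs

namespace MeasureTheory.Lp

variable {α E : Type*} [MeasurableSpace α] {μ : Measure α} {p : ℝ≥0∞} [NormedAddCommGroup E]

theorem smul_nonneg {c : ℝ} (hc : 0 ≤ c) {f : Lp ℝ p μ} (hf : 0 ≤ f) : 0 ≤ c • f := by
  refine (coeFn_nonneg _).1 ?_
  filter_upwards [coeFn_smul c f, (coeFn_nonneg f).2 hf] with t hsmul hft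
  rw [hsmul]
  exact mul_nonneg hc hft

variable [Fact (1 ≤ p)]

theorem norm_rpow_toReal_eq_integral (hp : p ≠ ∞) (f : Lp E p μ) :
    ‖f‖ ^ p.toReal = ∫ t, ‖f t‖ ^ p.toReal ∂μ := by
  have hp₀ : p ≠ 0 := (zero_lt_one.trans_le Fact.out).ne'
  rw [norm_def, toReal_eLpNorm (Lp.aestronglyMeasurable f),
    lpNorm_eq_integral_norm_rpow_toReal hp₀ hp (Lp.aestronglyMeasurable f),
    Real.rpow_inv_rpow (integral_nonneg fun _ => by positivity) (toReal_pos hp₀ hp).ne']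

theorem integrable_norm_rpow_toReal (hp : p ≠ ∞) (f : Lp E p μ) :
    Integrable (fun t => ‖f t‖ ^ p.toReal) μ :=
  (Lp.memLp f).integrable_norm_rpow (zero_lt_one.trans_le Fact.out).ne' hp

theorem norm_add_rpow_add_norm_sub_rpow_le (hp : p ≤ 2) (f g : Lp ℝ p μ) :
    ‖f + g‖ ^ p.toReal + ‖f - g‖ ^ p.toReal ≤ 2 * (‖f‖ ^ p.toReal + ‖g‖ ^ p.toReal) := by
  have hp_top : p ≠ ∞ := ne_top_of_le_ne_top ofNat_ne_top hp
  have hq₂ : p.toReal ≤ 2 := by simpa using toReal_mono ofNat_ne_top hp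
  have hint := integrable_norm_rpow_toReal (E := ℝ) (μ := μ) hp_top
  simp only [norm_rpow_toReal_eq_integral hp_top]
  rw [← integral_add (hint _) (hint _), ← integral_add (hint _) (hint _),
    ← integral_const_mul]
  refine integral_mono_ae ((hint _).add (hint _)) (((hint _).add (hint _)).const_mul 2) ?_
  filter_upwards [coeFn_add f g, coeFn_sub f g] with t hadd hsub
  simp only [Real.norm_eq_abs, hadd, hsub, Pi.add_apply, Pi.sub_apply]
  exact abs_add_rpow_add_abs_sub_rpow_le toReal_nonneg hq₂ (f t) (g t)

theorem norm_rpow_add_norm_rpow_le (hp : p ≠ ∞) {f g : Lp ℝ p μ} (hf : 0 ≤ f) (hg : 0 ≤ g) :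
    ‖f‖ ^ p.toReal + ‖g‖ ^ p.toReal ≤ ‖f + g‖ ^ p.toReal := by
  have hq₁ : 1 ≤ p.toReal := by simpa using toReal_mono hp (Fact.out : 1 ≤ p)
  have hint := integrable_norm_rpow_toReal (E := ℝ) (μ := μ) hp
  simp only [norm_rpow_toReal_eq_integral hp]
  rw [← integral_add (hint _) (hint _)]
  refine integral_mono_ae ((hint _).add (hint _)) (hint _) ?_
  filter_upwards [coeFn_add f g, (coeFn_nonneg f).2 hf, (coeFn_nonneg g).2 hg]
    with t hadd hft hgt
  simp only [Real.norm_eq_abs, hadd, Pi.add_apply, abs_of_nonneg hft, abs_of_nonneg hgt,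
    abs_of_nonneg (add_nonneg hft hgt)]
  exact Real.add_rpow_le_rpow_add hft hgt hq₁

theorem sum_norm_rpow_le_norm_sum_rpow (hp : p ≠ ∞) {ι : Type*} (s : Finset ι)
    {f : ι → Lp ℝ p μ} (hf : ∀ i ∈ s, 0 ≤ f i) :
    ∑ i ∈ s, ‖f i‖ ^ p.toReal ≤ ‖∑ i ∈ s, f i‖ ^ p.toReal := by
  classical
  induction s using Finset.induction_on with
  | empty => simp [Real.zero_rpow (toReal_pos (zero_lt_one.trans_le Fact.out).ne' hp).ne']
  | insert k t hk ih =>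
    rw [Finset.sum_insert hk, Finset.sum_insert hk]
    have hft : ∀ i ∈ t, 0 ≤ f i := fun i hi => hf i (Finset.mem_insert_of_mem hi)
    calc ‖f k‖ ^ p.toReal + ∑ i ∈ t, ‖f i‖ ^ p.toReal
        ≤ ‖f k‖ ^ p.toReal + ‖∑ i ∈ t, f i‖ ^ p.toReal := by gcongr; exact ih hft
      _ ≤ ‖f k + ∑ i ∈ t, f i‖ ^ p.toReal :=
        norm_rpow_add_norm_rpow_le hp (hf k (Finset.mem_insert_self k t)) (Finset.sum_nonneg hft)

end MeasureTheory.Lp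

/-- let `1 ≤ p ≤ 2` and let `(x_n)` be a normalized, a.e. non-negative,
`K`-unconditional sequence in `L_p(0,∞)`.  Then for every finitely supported scalar
sequence `(a_n)`,
`K⁻¹ ‖∑ a_n x_n‖_p ≤ (∑ |a_n| ^ p) ^ (1/p) ≤ K ‖∑ a_n x_n‖_p`. -/
theorem stmt9 (p : ℝ≥0∞) [Fact (1 ≤ p)] (hp : p ≤ 2) (K : ℝ)
    (x : ℕ → Lp ℝ p (volume.restrict (Set.Ioi (0 : ℝ))))
    (hnorm : ∀ n, ‖x n‖ = 1)
    (hpos : ∀ n, 0 ≤ᵐ[volume.restrict (Set.Ioi (0 : ℝ))] ⇑(x n))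
    (huncond : ∀ (s : Finset ℕ) (a ε : ℕ → ℝ), (∀ n, ε n = 1 ∨ ε n = -1) →
      ‖∑ n ∈ s, (ε n * a n) • x n‖ ≤ K * ‖∑ n ∈ s, a n • x n‖)
    (s : Finset ℕ) (a : ℕ → ℝ) :
    K⁻¹ * ‖∑ n ∈ s, a n • x n‖ ≤ (∑ n ∈ s, |a n| ^ p.toReal) ^ (1 / p.toReal) ∧
    (∑ n ∈ s, |a n| ^ p.toReal) ^ (1 / p.toReal) ≤ K * ‖∑ n ∈ s, a n • x n‖ := by
  have hp_top : p ≠ ∞ := ne_top_of_le_ne_top ofNat_ne_top hp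
  have hq : 0 < p.toReal := toReal_pos (zero_lt_one.trans_le Fact.out).ne' hp_top
  have hK : 1 ≤ K := by simpa [hnorm 0] using huncond {0} 1 1 fun _ => Or.inl rfl
  set M := ∑ n ∈ s, |a n| ^ p.toReal
  have hM : 0 ≤ M := by positivity
  rw [one_div]
  constructor
  · have htype :=
      Lp.norm_add_rpow_add_norm_sub_rpow_le (μ := volume.restrict (Set.Ioi (0 : ℝ))) hp
    obtain ⟨ε, hε, hsigned⟩ := exists_signs_norm_sum_smul_rpow_le hq htype s fun n => a n • x n
    simp only [norm_smul, hnorm, mul_one, Real.norm_eq_abs, smul_smul] at hsigned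
    have hunsign := huncond s (fun n => ε n * a n) ε hε
    simp only [← mul_assoc, mul_self_eq_one_iff.2 (hε _), one_mul] at hunsign
    rw [inv_mul_le_iff₀ (by linarith)]
    calc _ ≤ K * ‖∑ n ∈ s, (ε n * a n) • x n‖ := hunsign
      _ ≤ K * M ^ p.toReal⁻¹ := by
        gcongr
        exact (Real.le_rpow_inv_iff_of_pos (norm_nonneg _) hM hq).2 hsigned
  · have hsuper := Lp.sum_norm_rpow_le_norm_sum_rpow hp_top s (f := fun n => |a n| • x n)
      fun n _ => Lp.smul_nonneg (abs_nonneg _) ((Lp.coeFn_nonneg _).1 (hpos n))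
    simp only [norm_smul, hnorm, mul_one, Real.norm_eq_abs, abs_abs] at hsuper
    have hunsign := huncond s a (fun n => if 0 ≤ a n then 1 else -1) fun n => by
      split_ifs <;> simp
    simp only [ite_nonneg_mul_eq_abs] at hunsign
    exact ((Real.rpow_inv_le_iff_of_pos hM (norm_nonneg _) hq).2 hsuper).trans hunsign
end

section
/- Let 1 ≤ p < ∞ and let (x_n) be a sequence in L_p(0,∞) with ‖x_n‖_p = 1 and x_n ≥ 0 a.e. for every n, and suppose (x_n) is K-unconditional. Then there exist constants c, C > 0 depending only on K and p such that for every finitely supported scalar sequence (a_n), c·‖ sup_n |a_n| x_n ‖_p ≤ ‖∑_n a_n x_n‖_p ≤ C·‖ sup_n |a_n| x_n ‖_p, where sup_n |a_n| x_n denotes the pointwise supremum. -/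
/-!
Write `T = ∑ aₙ xₙ`, `F = ∑ |aₙ| xₙ` and `S = supₙ |aₙ| xₙ`. Since the `xₙ` are nonnegative,
`S ≤ F` pointwise, and `F` is a sign change of `T`; this gives `‖S‖ ≤ K ‖T‖`.

For the upper bound, average `‖T‖^p ≤ K^p ‖∑ εₙ aₙ xₙ‖^p` over all `2^|s|` sign patterns and apply
Khintchine's inequality at each point: the average of `|∑ εₙ aₙ xₙ(t)|^p` is at most
`A_p (∑ aₙ² xₙ(t)²)^(p/2) ≤ A_p (S(t) F(t))^(p/2)`. By Cauchy–Schwarz and `‖F‖ ≤ K ‖T‖` this gives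
`‖T‖^p ≤ K^(3p/2) A_p ‖S‖^(p/2) ‖T‖^(p/2)`, hence `‖T‖ ≤ K³ A_p^(2/p) ‖S‖`.

Khintchine's inequality is proved through exponential moments: `|y|^p ≤ ⌈p⌉! (e^y + e^(-y))`, the
average of `exp (∑ εₙ bₙ)` factors as `∏ cosh bₙ`, and `cosh b ≤ exp (b²/2)`.
-/

open MeasureTheory Filter Real Finset
open scoped ENNReal Nat

theorem abs_rpow_le_factorial_mul_exp_abs {p : ℝ} (hp : 0 ≤ p) (x : ℝ) :
    |x| ^ p ≤ ⌈p⌉₊ ! * exp |x| := by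
  have hfact : (1 : ℝ) ≤ ⌈p⌉₊ ! := Nat.one_le_cast.mpr (Nat.factorial_pos _)
  rcases le_total |x| 1 with hx | hx
  · calc |x| ^ p ≤ 1 := rpow_le_one (abs_nonneg x) hx hp
      _ ≤ ⌈p⌉₊ ! * exp |x| := one_le_mul_of_one_le_of_one_le hfact (one_le_exp (abs_nonneg x))
  · calc |x| ^ p ≤ |x| ^ (⌈p⌉₊ : ℝ) := rpow_le_rpow_of_exponent_le hx (Nat.le_ceil p)
      _ ≤ ⌈p⌉₊ ! * exp |x| := by
        rw [Real.rpow_natCast, ← div_le_iff₀' (by positivity)]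
        exact pow_div_factorial_le_exp _ (abs_nonneg x) _

theorem exp_add_exp_neg_le (x : ℝ) : exp x + exp (-x) ≤ 2 * exp (x ^ 2 / 2) := by
  have := cosh_le_exp_half_sq x
  rw [cosh_eq] at this
  linarith

theorem prod_exp_add_exp_neg_le {ι : Type*} (s : Finset ι) (c : ι → ℝ) :
    ∏ i ∈ s, (exp (c i) + exp (-c i)) ≤ 2 ^ s.card * exp ((∑ i ∈ s, c i ^ 2) / 2) :=
  calc ∏ i ∈ s, (exp (c i) + exp (-c i)) ≤ ∏ i ∈ s, 2 * exp (c i ^ 2 / 2) :=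
        prod_le_prod (fun _ _ => by positivity) fun i _ => exp_add_exp_neg_le (c i)
    _ = 2 ^ s.card * exp ((∑ i ∈ s, c i ^ 2) / 2) := by
        rw [prod_mul_distrib, prod_const, sum_div, exp_sum]

noncomputable def khintchineConst (p : ℝ) : ℝ := 2 * ⌈p⌉₊ ! * exp (1 / 2)

theorem khintchineConst_pos (p : ℝ) : 0 < khintchineConst p := by
  unfold khintchineConst; positivity

section Khintchine

variable {ι : Type*} [DecidableEq ι]

def rademacherSign (A : Finset ι) (i : ι) : ℝ := if i ∈ A then 1 else -1

theorem rademacherSign_eq_one_or_neg_one (A : Finset ι) (i : ι) :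
    rademacherSign A i = 1 ∨ rademacherSign A i = -1 := by
  unfold rademacherSign; split_ifs <;> simp

theorem rademacherSign_mul_self (A : Finset ι) (i : ι) :
    rademacherSign A i * rademacherSign A i = 1 := by
  unfold rademacherSign; split_ifs <;> norm_num

theorem sum_powerset_exp_sum_rademacherSign_mul (s : Finset ι) (c : ι → ℝ) :
    ∑ A ∈ s.powerset, exp (∑ i ∈ s, rademacherSign A i * c i) =
      ∏ i ∈ s, (exp (c i) + exp (-c i)) := by
  rw [prod_add]
  refine sum_congr rfl fun A hA => ?_
  simp only [exp_sum, rademacherSign, ite_mul, one_mul, neg_one_mul, apply_ite exp]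
  rw [prod_ite, filter_mem_eq_inter, inter_eq_right.mpr (mem_powerset.mp hA), ← sdiff_eq_filter]

theorem sum_powerset_abs_sum_rademacherSign_mul_rpow_le_exp (s : Finset ι) (c : ι → ℝ) {p : ℝ}
    (hp : 0 ≤ p) :
    ∑ A ∈ s.powerset, |∑ i ∈ s, rademacherSign A i * c i| ^ p ≤
      2 ^ (s.card + 1) * ⌈p⌉₊ ! * exp ((∑ i ∈ s, c i ^ 2) / 2) := by
  have hneg : ∀ A : Finset ι,
      -∑ i ∈ s, rademacherSign A i * c i = ∑ i ∈ s, rademacherSign A i * (-c i) := by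
    intro A; simp [sum_neg_distrib]
  calc ∑ A ∈ s.powerset, |∑ i ∈ s, rademacherSign A i * c i| ^ p
      ≤ ∑ A ∈ s.powerset, ⌈p⌉₊ ! * (exp (∑ i ∈ s, rademacherSign A i * c i) +
          exp (∑ i ∈ s, rademacherSign A i * (-c i))) := by
        refine sum_le_sum fun A _ => (abs_rpow_le_factorial_mul_exp_abs hp _).trans ?_
        rw [← hneg]
        gcongr
        exact exp_abs_le _
    _ = ⌈p⌉₊ ! * (∏ i ∈ s, (exp (c i) + exp (-c i)) + ∏ i ∈ s, (exp (-c i) + exp (- -c i))) := by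
        rw [← mul_sum, sum_add_distrib, sum_powerset_exp_sum_rademacherSign_mul,
          sum_powerset_exp_sum_rademacherSign_mul]
    _ ≤ ⌈p⌉₊ ! * (2 ^ s.card * exp ((∑ i ∈ s, c i ^ 2) / 2) +
          2 ^ s.card * exp ((∑ i ∈ s, (-c i) ^ 2) / 2)) := by
        gcongr <;> exact prod_exp_add_exp_neg_le s _
    _ = 2 ^ (s.card + 1) * ⌈p⌉₊ ! * exp ((∑ i ∈ s, c i ^ 2) / 2) := by
        simp only [neg_sq]; ring

/-- Khintchine's inequality, summed over all sign patterns. -/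
theorem sum_powerset_abs_sum_rademacherSign_mul_rpow_le (s : Finset ι) (b : ι → ℝ) {p : ℝ}
    (hp : 0 < p) :
    ∑ A ∈ s.powerset, |∑ i ∈ s, rademacherSign A i * b i| ^ p ≤
      2 ^ s.card * khintchineConst p * (∑ i ∈ s, b i ^ 2) ^ (p / 2) := by
  have hsq : 0 ≤ ∑ i ∈ s, b i ^ 2 := sum_nonneg fun i _ => sq_nonneg (b i)
  obtain ⟨σ, hσ_def⟩ : ∃ σ, σ = √(∑ i ∈ s, b i ^ 2) := ⟨_, rfl⟩
  have hσp : (∑ i ∈ s, b i ^ 2) ^ (p / 2) = σ ^ p := by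
    rw [hσ_def, sqrt_eq_rpow, ← rpow_mul hsq, one_div_mul_eq_div]
  rw [hσp]
  rcases (sqrt_nonneg _ : 0 ≤ √(∑ i ∈ s, b i ^ 2)).eq_or_lt with hσ | hσ
  · have hb : ∀ i ∈ s, b i = 0 := by
      rw [eq_comm, sqrt_eq_zero hsq, sum_eq_zero_iff_of_nonneg fun i _ => sq_nonneg _] at hσ
      exact fun i hi => pow_eq_zero_iff two_ne_zero |>.mp (hσ i hi)
    rw [hσ_def, ← hσ, zero_rpow hp.ne', mul_zero]
    exact (sum_eq_zero fun A _ => by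
      rw [sum_eq_zero fun i hi => by rw [hb i hi, mul_zero], abs_zero, zero_rpow hp.ne']).le
  rw [← hσ_def] at hσ
  have hnormalized : ∑ i ∈ s, (b i / σ) ^ 2 = 1 := by
    simp only [div_pow, ← sum_div, hσ_def, sq_sqrt hsq]
    exact div_self (sqrt_pos.mp (hσ_def ▸ hσ)).ne'
  have hscale : ∀ A : Finset ι, |∑ i ∈ s, rademacherSign A i * (b i / σ)| ^ p =
      |∑ i ∈ s, rademacherSign A i * b i| ^ p / σ ^ p := by
    intro A
    simp only [← mul_div_assoc, ← sum_div, abs_div, abs_of_pos hσ]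
    exact div_rpow (abs_nonneg _) hσ.le p
  have := sum_powerset_abs_sum_rademacherSign_mul_rpow_le_exp s (fun i => b i / σ) hp.le
  simp only [hscale, ← sum_div, hnormalized] at this
  rwa [div_le_iff₀ (rpow_pos_of_pos hσ p), show (2 : ℝ) ^ (s.card + 1) * ⌈p⌉₊ ! * exp (1 / 2) =
    2 ^ s.card * khintchineConst p by unfold khintchineConst; ring] at this

theorem sum_powerset_abs_sum_rademacherSign_mul_rpow_le_of_abs_le (s : Finset ι) (b : ι → ℝ)
    {p : ℝ} (hp : 0 < p) {M : ℝ} (hM : ∀ i ∈ s, |b i| ≤ M) :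
    ∑ A ∈ s.powerset, |∑ i ∈ s, rademacherSign A i * b i| ^ p ≤
      2 ^ s.card * khintchineConst p * (M * ∑ i ∈ s, |b i|) ^ (p / 2) := by
  have hsq : ∑ i ∈ s, b i ^ 2 ≤ M * ∑ i ∈ s, |b i| := by
    rw [mul_sum]
    refine sum_le_sum fun i hi => ?_
    rw [← sq_abs, sq]
    exact mul_le_mul_of_nonneg_right (hM i hi) (abs_nonneg _)
  refine (sum_powerset_abs_sum_rademacherSign_mul_rpow_le s b hp).trans ?_
  exact mul_le_mul_of_nonneg_left (rpow_le_rpow (sum_nonneg fun i _ => sq_nonneg (b i)) hsq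
    (by positivity)) (mul_nonneg (by positivity) (khintchineConst_pos p).le)

end Khintchine

section BoundedSupremum

variable {ι : Type*} {s : Finset ι} {f : ι → ℝ}

theorem biSup_finset_nonneg (hf : ∀ i ∈ s, 0 ≤ f i) : 0 ≤ ⨆ i ∈ s, f i :=
  Real.iSup_nonneg fun i => Real.iSup_nonneg (hf i)

theorem biSup_finset_le {a : ℝ} (ha : 0 ≤ a) (h : ∀ i ∈ s, f i ≤ a) : ⨆ i ∈ s, f i ≤ a :=
  Real.iSup_le (fun i => Real.iSup_le (h i) ha) ha

theorem le_biSup_finset {i : ι} (hi : i ∈ s) : f i ≤ ⨆ j ∈ s, f j := by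
  have hbdd : BddAbove (Set.range fun j => ⨆ _ : j ∈ s, f j) :=
    ⟨∑ j ∈ s, |f j|, Set.forall_mem_range.mpr fun j =>
      Real.iSup_le
        (fun hj => (le_abs_self _).trans (single_le_sum (fun k _ => abs_nonneg (f k)) hj))
        (sum_nonneg fun k _ => abs_nonneg _)⟩
  exact le_ciSup_of_le hbdd i (ciSup_pos (f := fun _ => f i) hi).ge

end BoundedSupremum

theorem le_rpow_two_div_mul_of_rpow_le {t σ A r : ℝ} (ht : 0 ≤ t) (hσ : 0 ≤ σ) (hA : 0 ≤ A)
    (hr : 0 < r) (h : t ^ r ≤ A * (σ * t) ^ (r / 2)) : t ≤ A ^ (2 / r) * σ := by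
  rcases ht.eq_or_lt with rfl | ht
  · positivity
  have hhalf : t ^ (r / 2) ≤ A * σ ^ (r / 2) := by
    refine le_of_mul_le_mul_right ?_ (rpow_pos_of_pos ht (r / 2))
    rwa [← rpow_add ht, add_halves, mul_assoc, ← mul_rpow hσ ht.le]
  have hexp : r / 2 * (2 / r) = 1 := by field_simp
  calc t = (t ^ (r / 2)) ^ (2 / r) := by rw [← rpow_mul ht.le, hexp, Real.rpow_one]
    _ ≤ (A * σ ^ (r / 2)) ^ (2 / r) := rpow_le_rpow (by positivity) hhalf (by positivity)
    _ = A ^ (2 / r) * σ := by rw [mul_rpow hA (by positivity), ← rpow_mul hσ, hexp, Real.rpow_one]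

def IsUnconditional {ι E : Type*} [SeminormedAddCommGroup E] [Module ℝ E] (K : ℝ) (x : ι → E) :
    Prop :=
  ∀ (s : Finset ι) (a ε : ι → ℝ), (∀ i, ε i = 1 ∨ ε i = -1) →
    ‖∑ i ∈ s, (ε i * a i) • x i‖ ≤ K * ‖∑ i ∈ s, a i • x i‖

namespace IsUnconditional

variable {ι E : Type*} [SeminormedAddCommGroup E] [Module ℝ E] {K : ℝ} {x : ι → E}

theorem mono (hx : IsUnconditional K x) {L : ℝ} (hKL : K ≤ L) : IsUnconditional L x :=
  fun s a ε hε => (hx s a ε hε).trans (mul_le_mul_of_nonneg_right hKL (norm_nonneg _))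

theorem norm_sum_le_rademacherSign [DecidableEq ι] (hx : IsUnconditional K x) (s : Finset ι)
    (a : ι → ℝ) (A : Finset ι) :
    ‖∑ i ∈ s, a i • x i‖ ≤ K * ‖∑ i ∈ s, (rademacherSign A i * a i) • x i‖ := by
  simpa only [← mul_assoc, rademacherSign_mul_self, one_mul] using
    hx s (fun i => rademacherSign A i * a i) (rademacherSign A) (rademacherSign_eq_one_or_neg_one A)

theorem norm_sum_abs_smul_le (hx : IsUnconditional K x) (s : Finset ι) (a : ι → ℝ) :
    ‖∑ i ∈ s, |a i| • x i‖ ≤ K * ‖∑ i ∈ s, a i • x i‖ := by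
  have hsign : ∀ i, (if 0 ≤ a i then 1 else -1) * a i = |a i| := fun i => by
    split_ifs with h
    · rw [one_mul, abs_of_nonneg h]
    · rw [neg_one_mul, abs_of_neg (not_le.mp h)]
  simpa only [hsign] using hx s a (fun i => if 0 ≤ a i then 1 else -1) fun i => by
    split_ifs <;> simp

theorem two_pow_card_mul_norm_sum_rpow_le [DecidableEq ι] (hx : IsUnconditional K x) (hK : 0 ≤ K)
    {r : ℝ} (hr : 0 ≤ r) (s : Finset ι) (a : ι → ℝ) :
    2 ^ s.card * ‖∑ i ∈ s, a i • x i‖ ^ r ≤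
      K ^ r * ∑ A ∈ s.powerset, ‖∑ i ∈ s, (rademacherSign A i * a i) • x i‖ ^ r :=
  calc 2 ^ s.card * ‖∑ i ∈ s, a i • x i‖ ^ r = ∑ A ∈ s.powerset, ‖∑ i ∈ s, a i • x i‖ ^ r := by
        rw [sum_const, card_powerset, nsmul_eq_mul]; push_cast; rfl
    _ ≤ ∑ A ∈ s.powerset, (K * ‖∑ i ∈ s, (rademacherSign A i * a i) • x i‖) ^ r :=
        sum_le_sum fun A _ => rpow_le_rpow (norm_nonneg _) (hx.norm_sum_le_rademacherSign s a A) hr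
    _ = K ^ r * ∑ A ∈ s.powerset, ‖∑ i ∈ s, (rademacherSign A i * a i) • x i‖ ^ r := by
        rw [mul_sum]; simp only [mul_rpow hK (norm_nonneg _)]

end IsUnconditional

theorem ENNReal.toReal_pos_of_one_le {p : ℝ≥0∞} (hp1 : 1 ≤ p) (hp : p ≠ ∞) : 0 < p.toReal :=
  ENNReal.toReal_pos (one_pos.trans_le hp1).ne' hp

theorem enorm_rpow_eq_ofReal {E : Type*} [SeminormedAddCommGroup E] (y : E) {q : ℝ} (hq : 0 ≤ q) :
    ‖y‖ₑ ^ q = ENNReal.ofReal (‖y‖ ^ q) := by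
  rw [← ofReal_norm, ENNReal.ofReal_rpow_of_nonneg (norm_nonneg y) hq]

namespace MeasureTheory.Lp

variable {α ι E : Type*} [MeasurableSpace α] {μ : Measure α} [NormedAddCommGroup E] {p : ℝ≥0∞}

theorem coeFn_sum_smul (s : Finset ι) (c : ι → ℝ) (f : ι → Lp ℝ p μ) :
    ⇑(∑ i ∈ s, c i • f i) =ᵐ[μ] fun x => ∑ i ∈ s, c i * f i x := by
  filter_upwards [coeFn_fun_finsetSum s (fun i => c i • f i),
    (eventually_all_finset s).2 fun i _ => coeFn_smul (c i) (f i)] with x hsum hsmul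
  rw [hsum]
  exact sum_congr rfl fun i hi => by rw [hsmul i hi]; rfl

variable [Fact (1 ≤ p)]

theorem enorm_rpow_eq_lintegral (hp : p ≠ ∞) (f : Lp E p μ) :
    ‖f‖ₑ ^ p.toReal = ∫⁻ x, ‖f x‖ₑ ^ p.toReal ∂μ := by
  rw [Lp.enorm_def, eLpNorm_eq_lintegral_rpow_enorm_toReal (one_pos.trans_le Fact.out).ne' hp,
    ← ENNReal.rpow_mul, one_div_mul_cancel (ENNReal.toReal_pos_of_one_le Fact.out hp).ne',
    ENNReal.rpow_one]

theorem sum_norm_rpow_le_of_ae_le (hp : p ≠ ∞) (A : Finset ι) (g : ι → Lp E p μ)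
    (u v : Lp E p μ) {C : ℝ} (hC : 0 ≤ C)
    (h : ∀ᵐ x ∂μ, ∑ i ∈ A, ‖g i x‖ ^ p.toReal ≤ C * (‖u x‖ * ‖v x‖) ^ (p.toReal / 2)) :
    ∑ i ∈ A, ‖g i‖ ^ p.toReal ≤ C * (‖u‖ * ‖v‖) ^ (p.toReal / 2) := by
  set r := p.toReal
  have hr : 0 < r := ENNReal.toReal_pos_of_one_le Fact.out hp
  have henorm : ∑ i ∈ A, ‖g i‖ₑ ^ r ≤ ENNReal.ofReal C * (‖u‖ₑ ^ (r / 2) * ‖v‖ₑ ^ (r / 2)) :=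
    calc ∑ i ∈ A, ‖g i‖ₑ ^ r = ∫⁻ x, ∑ i ∈ A, ‖g i x‖ₑ ^ r ∂μ := by
          rw [lintegral_finsetSum' _ fun i _ => (Lp.aestronglyMeasurable (g i)).enorm.pow_const r]
          exact sum_congr rfl fun i _ => enorm_rpow_eq_lintegral hp (g i)
      _ ≤ ∫⁻ x, ENNReal.ofReal C * (‖u x‖ₑ ^ (r / 2) * ‖v x‖ₑ ^ (r / 2)) ∂μ := by
          refine lintegral_mono_ae (h.mono fun x hx => ?_)
          have := ENNReal.ofReal_le_ofReal hx
          rw [ENNReal.ofReal_sum_of_nonneg fun i _ => by positivity, ENNReal.ofReal_mul hC,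
            Real.mul_rpow (norm_nonneg _) (norm_nonneg _),
            ENNReal.ofReal_mul (by positivity)] at this
          simpa only [enorm_rpow_eq_ofReal _ hr.le, enorm_rpow_eq_ofReal _ (half_pos hr).le]
      _ = ENNReal.ofReal C * ∫⁻ x, ‖u x‖ₑ ^ (r / 2) * ‖v x‖ₑ ^ (r / 2) ∂μ :=
          lintegral_const_mul' _ _ ENNReal.ofReal_ne_top
      _ ≤ ENNReal.ofReal C * (‖u‖ₑ ^ (r / 2) * ‖v‖ₑ ^ (r / 2)) := by
          gcongr
          have := ENNReal.lintegral_mul_le_Lp_mul_Lq μ Real.HolderConjugate.two_two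
            ((Lp.aestronglyMeasurable u).enorm.pow_const (r / 2))
            ((Lp.aestronglyMeasurable v).enorm.pow_const (r / 2))
          simp only [Pi.mul_apply, ← ENNReal.rpow_mul, div_mul_cancel₀ r two_ne_zero] at this
          rwa [← enorm_rpow_eq_lintegral hp u, ← enorm_rpow_eq_lintegral hp v, ← ENNReal.rpow_mul,
            ← ENNReal.rpow_mul, mul_one_div] at this
  calc ∑ i ∈ A, ‖g i‖ ^ r = (∑ i ∈ A, ‖g i‖ₑ ^ r).toReal := by
        rw [ENNReal.toReal_sum fun i _ => by finiteness]
        simp only [← ENNReal.toReal_rpow, toReal_enorm]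
    _ ≤ (ENNReal.ofReal C * (‖u‖ₑ ^ (r / 2) * ‖v‖ₑ ^ (r / 2))).toReal :=
        ENNReal.toReal_mono (by finiteness) henorm
    _ = C * (‖u‖ * ‖v‖) ^ (r / 2) := by
        rw [ENNReal.toReal_mul, ENNReal.toReal_ofReal hC, ENNReal.toReal_mul, ← ENNReal.toReal_rpow,
          ← ENNReal.toReal_rpow, toReal_enorm, toReal_enorm,
          Real.mul_rpow (norm_nonneg _) (norm_nonneg _)]

theorem sum_powerset_norm_sum_rademacherSign_smul_rpow_le [DecidableEq ι] (hp : p ≠ ∞)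
    {x : ι → Lp ℝ p μ} (hpos : ∀ i, 0 ≤ᵐ[μ] ⇑(x i)) (s : Finset ι) (a : ι → ℝ) (S : Lp ℝ p μ)
    (hS : ⇑S =ᵐ[μ] fun t => ⨆ i ∈ s, |a i| * x i t) :
    ∑ A ∈ s.powerset, ‖∑ i ∈ s, (rademacherSign A i * a i) • x i‖ ^ p.toReal ≤
      2 ^ s.card * khintchineConst p.toReal *
        (‖S‖ * ‖∑ i ∈ s, |a i| • x i‖) ^ (p.toReal / 2) := by
  have hr : 0 < p.toReal := ENNReal.toReal_pos_of_one_le Fact.out hp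
  refine sum_norm_rpow_le_of_ae_le hp _ _ S _
    (mul_nonneg (by positivity) (khintchineConst_pos _).le) ?_
  filter_upwards [(eventually_all_finset s).2 fun i _ => hpos i, hS,
    coeFn_sum_smul s (fun i => |a i|) x,
    (eventually_all_finset s.powerset).2 fun A _ =>
      coeFn_sum_smul s (fun i => rademacherSign A i * a i) x] with t ht hSt hFt hXt
  have hb : ∀ i ∈ s, |a i * x i t| ≤ ‖S t‖ := fun i hi => by
    rw [hSt, abs_mul, abs_of_nonneg (ht i hi)]
    exact (le_biSup_finset (f := fun i => |a i| * x i t) hi).trans (le_abs_self _)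
  have hF : ∑ i ∈ s, |a i * x i t| ≤ ‖(∑ i ∈ s, |a i| • x i : Lp ℝ p μ) t‖ := by
    rw [hFt]
    refine le_of_eq_of_le (sum_congr rfl fun i hi => ?_) (le_abs_self _)
    rw [abs_mul, abs_of_nonneg (ht i hi)]
  calc ∑ A ∈ s.powerset, ‖(∑ i ∈ s, (rademacherSign A i * a i) • x i : Lp ℝ p μ) t‖ ^ p.toReal
      = ∑ A ∈ s.powerset, |∑ i ∈ s, rademacherSign A i * (a i * x i t)| ^ p.toReal := by
        refine sum_congr rfl fun A hA => ?_
        rw [Real.norm_eq_abs, hXt A hA]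
        simp only [mul_assoc]
    _ ≤ 2 ^ s.card * khintchineConst p.toReal *
          (‖S t‖ * ∑ i ∈ s, |a i * x i t|) ^ (p.toReal / 2) :=
        sum_powerset_abs_sum_rademacherSign_mul_rpow_le_of_abs_le s _ hr hb
    _ ≤ 2 ^ s.card * khintchineConst p.toReal *
          (‖S t‖ * ‖(∑ i ∈ s, |a i| • x i : Lp ℝ p μ) t‖) ^ (p.toReal / 2) := by
        gcongr
        exact mul_nonneg (by positivity) (khintchineConst_pos _).le

end MeasureTheory.Lp

namespace IsUnconditional

variable {α ι : Type*} [MeasurableSpace α] {μ : Measure α} {p : ℝ≥0∞} [Fact (1 ≤ p)] {K : ℝ}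
  {x : ι → Lp ℝ p μ}

theorem norm_le_of_ae_eq_biSup (hx : IsUnconditional K x) (hpos : ∀ i, 0 ≤ᵐ[μ] ⇑(x i))
    (s : Finset ι) (a : ι → ℝ) (S : Lp ℝ p μ) (hS : ⇑S =ᵐ[μ] fun t => ⨆ i ∈ s, |a i| * x i t) :
    ‖S‖ ≤ K * ‖∑ i ∈ s, a i • x i‖ := by
  refine (Lp.norm_le_norm_of_ae_le ?_).trans (hx.norm_sum_abs_smul_le s a)
  filter_upwards [(eventually_all_finset s).2 fun i _ => hpos i, hS,
    Lp.coeFn_sum_smul s (fun i => |a i|) x] with t ht hSt hFt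
  have hterm : ∀ i ∈ s, 0 ≤ |a i| * x i t := fun i hi => mul_nonneg (abs_nonneg _) (ht i hi)
  rw [hSt, hFt, Real.norm_eq_abs, Real.norm_eq_abs, abs_of_nonneg (sum_nonneg hterm),
    abs_of_nonneg (biSup_finset_nonneg hterm)]
  exact biSup_finset_le (sum_nonneg hterm) fun i hi => single_le_sum hterm hi

theorem norm_sum_smul_le_of_ae_eq_biSup [DecidableEq ι] (hp : p ≠ ∞) (hx : IsUnconditional K x)
    (hK : 0 ≤ K) (hpos : ∀ i, 0 ≤ᵐ[μ] ⇑(x i)) (s : Finset ι) (a : ι → ℝ) (S : Lp ℝ p μ)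
    (hS : ⇑S =ᵐ[μ] fun t => ⨆ i ∈ s, |a i| * x i t) :
    ‖∑ i ∈ s, a i • x i‖ ≤ K ^ 3 * khintchineConst p.toReal ^ (2 / p.toReal) * ‖S‖ := by
  set r := p.toReal
  have hr : 0 < r := ENNReal.toReal_pos_of_one_le Fact.out hp
  set D := khintchineConst r
  have hD : 0 < D := khintchineConst_pos r
  set T := ∑ i ∈ s, a i • x i
  set F := ∑ i ∈ s, |a i| • x i
  have hSF : (‖S‖ * ‖F‖) ^ (r / 2) ≤ K ^ (r / 2) * (‖S‖ * ‖T‖) ^ (r / 2) := by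
    rw [← mul_rpow hK (by positivity)]
    refine rpow_le_rpow (by positivity) ?_ (by positivity)
    nlinarith [mul_le_mul_of_nonneg_left (hx.norm_sum_abs_smul_le s a) (norm_nonneg S)]
  have hT : ‖T‖ ^ r ≤ K ^ r * K ^ (r / 2) * D * (‖S‖ * ‖T‖) ^ (r / 2) := by
    refine le_of_mul_le_mul_left ?_ (by positivity : (0 : ℝ) < 2 ^ s.card)
    calc 2 ^ s.card * ‖T‖ ^ r
        ≤ K ^ r * ∑ A ∈ s.powerset, ‖∑ i ∈ s, (rademacherSign A i * a i) • x i‖ ^ r :=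
          hx.two_pow_card_mul_norm_sum_rpow_le hK hr.le s a
      _ ≤ K ^ r * (2 ^ s.card * D * (‖S‖ * ‖F‖) ^ (r / 2)) := by
          gcongr
          exact Lp.sum_powerset_norm_sum_rademacherSign_smul_rpow_le hp hpos s a S hS
      _ ≤ K ^ r * (2 ^ s.card * D * (K ^ (r / 2) * (‖S‖ * ‖T‖) ^ (r / 2))) := by gcongr
      _ = 2 ^ s.card * (K ^ r * K ^ (r / 2) * D * (‖S‖ * ‖T‖) ^ (r / 2)) := by ring
  calc ‖T‖ ≤ (K ^ r * K ^ (r / 2) * D) ^ (2 / r) * ‖S‖ :=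
        le_rpow_two_div_mul_of_rpow_le (norm_nonneg _) (norm_nonneg _) (by positivity) hr hT
    _ = K ^ 3 * D ^ (2 / r) * ‖S‖ := by
        rw [mul_rpow (by positivity) hD.le, mul_rpow (by positivity) (by positivity),
          ← rpow_mul hK, ← rpow_mul hK, show r * (2 / r) = 2 by field_simp,
          show r / 2 * (2 / r) = 1 by field_simp, Real.rpow_one, Real.rpow_two]
        ring

end IsUnconditional

/-- let `1 ≤ p < ∞` and let `(x_n)` be a normalized, a.e. non-negative,
`K`-unconditional sequence in `L_p(0,∞)`.  Then there are constants `c, C > 0` depending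
only on `K` and `p` such that for every finitely supported scalar sequence `(a_n)`,
`c ‖sup_n |a_n| x_n‖_p ≤ ‖∑ a_n x_n‖_p ≤ C ‖sup_n |a_n| x_n‖_p`, where
`sup_n |a_n| x_n` denotes the pointwise supremum (here `S` is an element of `L_p`
represented by that pointwise supremum). -/
theorem stmt11 (p : ℝ≥0∞) [Fact (1 ≤ p)] (hp : p ≠ ∞) (K : ℝ) :
    ∃ c C : ℝ, 0 < c ∧ 0 < C ∧
      ∀ x : ℕ → Lp ℝ p (volume.restrict (Set.Ioi (0 : ℝ))),
        (∀ n, ‖x n‖ = 1) →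
        (∀ n, 0 ≤ᵐ[volume.restrict (Set.Ioi (0 : ℝ))] ⇑(x n)) →
        (∀ (s : Finset ℕ) (a ε : ℕ → ℝ), (∀ n, ε n = 1 ∨ ε n = -1) →
          ‖∑ n ∈ s, (ε n * a n) • x n‖ ≤ K * ‖∑ n ∈ s, a n • x n‖) →
        ∀ (s : Finset ℕ) (a : ℕ → ℝ) (S : Lp ℝ p (volume.restrict (Set.Ioi (0 : ℝ)))),
          (⇑S =ᵐ[volume.restrict (Set.Ioi (0 : ℝ))] fun t => ⨆ n ∈ s, |a n| * x n t) →
          c * ‖S‖ ≤ ‖∑ n ∈ s, a n • x n‖ ∧ ‖∑ n ∈ s, a n • x n‖ ≤ C * ‖S‖ := by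
  have hK : 0 < max K 1 := lt_max_of_lt_right one_pos
  refine ⟨(max K 1)⁻¹, max K 1 ^ 3 * khintchineConst p.toReal ^ (2 / p.toReal), inv_pos.mpr hK,
    mul_pos (pow_pos hK 3) (rpow_pos_of_pos (khintchineConst_pos _) _), ?_⟩
  intro x _ hpos hunc s a S hS
  have hx : IsUnconditional (max K 1) x := IsUnconditional.mono hunc (le_max_left K 1)
  refine ⟨?_, hx.norm_sum_smul_le_of_ae_eq_biSup hp hK.le hpos s a S hS⟩
  rw [inv_mul_le_iff₀ hK]
  exact hx.norm_le_of_ae_eq_biSup hpos s a S hS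
end

section
/- Let 1 < p < ∞ and let (f_n, g_n) be an unconditionally quasibasic sequence in L_p(0,1) with each f_n ≥ 0 a.e. If (y_n) is a sequence in the closed linear span [f_n] of {f_n} with ‖y_n‖_p = 1 for all n and y_n → 0 weakly, then ‖y_n‖_{L1} → 0 as n → ∞. -/
open MeasureTheory Filter Topology ENNReal

/-!
Let `S` be the closed span of the `f n`. By Banach–Steinhaus the partial-sum operators
`x ↦ ∑ n ∈ F, g n x • f n` are uniformly bounded on `S`. Applying `∫` to them and splitting the
sum by signs shows that the coefficient map `x ↦ (g n x * ∫ f n)ₙ` is bounded from `S` into `ℓ¹`;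
since `f n ≥ 0`, the `ℓ¹` norm of the coefficients dominates the `L₁` norm of `x`. By Hahn–Banach
a weakly null sequence in `S` has weakly null coefficients in `ℓ¹`, and by Schur's theorem
(a gliding hump) these tend to zero in norm.
-/

section Schur

lemma two_mul_sum_abs_sub_tsum_abs_le_tsum_mul {r b : ℕ → ℝ} (hr : Summable fun n => |r n|)
    (hb : ∀ n, |b n| ≤ 1) (F : Finset ℕ) (hF : ∀ n ∈ F, b n * r n = |r n|) :
    2 * ∑ n ∈ F, |r n| - ∑' n, |r n| ≤ ∑' n, b n * r n := by
  have hbr_le : ∀ n, |b n * r n| ≤ |r n| := fun n => by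
    rw [abs_mul]; exact mul_le_of_le_one_left (abs_nonneg _) (hb n)
  have hbr : Summable fun n => b n * r n := hr.of_norm_bounded hbr_le
  have := calc
    2 * ∑ n ∈ F, |r n| = ∑ n ∈ F, (b n * r n + |r n|) := by
      rw [Finset.mul_sum]; exact Finset.sum_congr rfl fun n hn => by rw [hF n hn]; ring
    _ ≤ ∑' n, (b n * r n + |r n|) :=
      (hbr.add hr).sum_le_tsum F fun n _ => by linarith [(abs_le.1 (hbr_le n)).1]
    _ = ∑' n, b n * r n + ∑' n, |r n| := hbr.tsum_add hr
  linarith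

variable {a : ℕ → ℕ → ℝ}

lemma tendsto_apply_of_tendsto_tsum_mul
    (hw : ∀ b : ℕ → ℝ, (∀ n, |b n| ≤ 1) → Tendsto (fun k => ∑' n, b n * a k n) atTop (𝓝 0))
    (n : ℕ) : Tendsto (fun k => a k n) atTop (𝓝 0) := by
  classical
  simpa [ite_mul] using hw (fun m => if m = n then 1 else 0) fun m => by split_ifs <;> simp

lemma exists_block_index {N : ℕ → ℕ} (hN : StrictMono N) :
    ∃ j : ℕ → ℕ, ∀ i, ∀ n ∈ Finset.Ico (N i) (N (i + 1)), j n = i := by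
  classical
  have hex : ∀ n, ∃ i, n < N (i + 1) := fun n => ⟨n, (hN.le_apply).trans_lt (hN n.lt_succ_self)⟩
  refine ⟨fun n => Nat.find (hex n), fun i n hn => ?_⟩
  rw [Finset.mem_Ico] at hn
  refine (Nat.find_eq_iff _).2 ⟨hn.2, fun j hj hlt => ?_⟩
  exact lt_irrefl n (hlt.trans_le ((hN.monotone (Nat.succ_le_of_lt hj)).trans hn.1))

lemma exists_gliding_hump_step (hsum : ∀ k, Summable fun n => |a k n|)
    (hcoord : ∀ n, Tendsto (fun k => a k n) atTop (𝓝 0)) {δ ε : ℝ} (hε : 0 < ε)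
    (hδ : ∃ᶠ k in atTop, δ ≤ ∑' n, |a k n|) (q : ℕ × ℕ) :
    ∃ q' : ℕ × ℕ, q.1 < q'.1 ∧ q.2 < q'.2 ∧ δ ≤ ∑' n, |a q'.1 n| ∧
      ∑ n ∈ Finset.range q.2, |a q'.1 n| < ε ∧
      ∑' n, |a q'.1 n| - ε < ∑ n ∈ Finset.range q'.2, |a q'.1 n| := by
  have hhead : Tendsto (fun k => ∑ n ∈ Finset.range q.2, |a k n|) atTop (𝓝 0) := by
    simpa using tendsto_finsetSum _ fun n _ => (hcoord n).abs
  obtain ⟨k, hδk, hheadk, hk⟩ :=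
    (hδ.and_eventually ((hhead.eventually (gt_mem_nhds hε)).and (eventually_gt_atTop q.1))).exists
  obtain ⟨N, htail, hN⟩ := (((hsum k).hasSum.tendsto_sum_nat.eventually
    (lt_mem_nhds (sub_lt_self _ hε))).and (eventually_gt_atTop q.2)).exists
  exact ⟨(k, N), hk, hN, hδk, hheadk, htail⟩

lemma exists_gliding_hump (hsum : ∀ k, Summable fun n => |a k n|)
    (hcoord : ∀ n, Tendsto (fun k => a k n) atTop (𝓝 0)) {δ ε : ℝ} (hε : 0 < ε)
    (hδ : ∃ᶠ k in atTop, δ ≤ ∑' n, |a k n|) :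
    ∃ k N : ℕ → ℕ, StrictMono k ∧ StrictMono N ∧ ∀ i, δ ≤ ∑' n, |a (k i) n| ∧
      ∑ n ∈ Finset.range (N i), |a (k i) n| < ε ∧
      ∑' n, |a (k i) n| - ε < ∑ n ∈ Finset.range (N (i + 1)), |a (k i) n| := by
  choose step hstep using exists_gliding_hump_step hsum hcoord hε hδ
  set Q : ℕ → ℕ × ℕ := fun i => step^[i] (0, 0)
  have hQ : ∀ i, Q (i + 1) = step (Q i) := fun i => Function.iterate_succ_apply' step i _
  refine ⟨fun i => (Q (i + 1)).1, fun i => (Q i).2, strictMono_nat_of_lt_succ fun i => ?_,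
    strictMono_nat_of_lt_succ fun i => ?_, fun i => ?_⟩
  · rw [hQ (i + 1)]; exact (hstep _).1
  · rw [hQ i]; exact (hstep _).2.1
  · beta_reduce; rw [hQ i]; exact (hstep _).2.2

theorem tendsto_tsum_abs_of_tendsto_tsum_mul (hsum : ∀ k, Summable fun n => |a k n|)
    (hw : ∀ b : ℕ → ℝ, (∀ n, |b n| ≤ 1) → Tendsto (fun k => ∑' n, b n * a k n) atTop (𝓝 0)) :
    Tendsto (fun k => ∑' n, |a k n|) atTop (𝓝 0) := by
  refine tendsto_order.2 ⟨fun c hc => Eventually.of_forall fun k =>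
    hc.trans_le (tsum_nonneg fun n => abs_nonneg _), fun δ hδ => ?_⟩
  by_contra hfreq
  simp_rw [not_eventually, not_lt] at hfreq
  obtain ⟨k, N, hk, hN, hhump⟩ :=
    exists_gliding_hump hsum (tendsto_apply_of_tendsto_tsum_mul hw) (ε := δ / 8) (by positivity)
      hfreq
  obtain ⟨j, hj⟩ := exists_block_index hN
  -- on the `i`-th block the signs are those of the row `k i`, which is concentrated there
  set b : ℕ → ℝ := fun n => SignType.sign (a (k (j n)) n)
  have hb : ∀ n, |b n| ≤ 1 := fun n => by
    simp only [b]; cases SignType.sign (a (k (j n)) n) <;> simp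
  have hlow : ∀ i, δ / 2 ≤ ∑' n, b n * a (k i) n := fun i => by
    obtain ⟨hδi, hhead, htail⟩ := hhump i
    have hblock := two_mul_sum_abs_sub_tsum_abs_le_tsum_mul (hsum (k i)) hb
      (Finset.Ico (N i) (N (i + 1))) fun n hn => by simp only [b, hj i n hn, sign_mul_self]
    rw [Finset.sum_Ico_eq_sub _ (hN.monotone (Nat.le_add_right i 1))] at hblock
    linarith
  linarith [ge_of_tendsto' ((hw b hb).comp hk.tendsto_atTop) hlow]

end Schur

theorem Finset.sum_abs_le_two_mul {ι : Type*} (v : ι → ℝ) {M : ℝ}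
    (h : ∀ G : Finset ι, |∑ n ∈ G, v n| ≤ M) (F : Finset ι) : ∑ n ∈ F, |v n| ≤ 2 * M := by
  classical
  have hpos : ∑ n ∈ F with 0 ≤ v n, |v n| = ∑ n ∈ F with 0 ≤ v n, v n :=
    Finset.sum_congr rfl fun n hn => abs_of_nonneg (Finset.mem_filter.1 hn).2
  have hneg : ∑ n ∈ F with ¬0 ≤ v n, |v n| = -∑ n ∈ F with ¬0 ≤ v n, v n := by
    rw [← Finset.sum_neg_distrib]
    exact Finset.sum_congr rfl fun n hn => abs_of_neg (not_le.1 (Finset.mem_filter.1 hn).2)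
  rw [← Finset.sum_filter_add_sum_filter_not F (fun n => 0 ≤ v n), hpos, hneg]
  linarith [(abs_le.1 (h (F.filter fun n => 0 ≤ v n))).2,
    (abs_le.1 (h (F.filter fun n => ¬0 ≤ v n))).1]

section Quasibasic

variable {𝕜 E : Type*} [NontriviallyNormedField 𝕜] [NormedAddCommGroup E] [NormedSpace 𝕜 E]

theorem HasSum.exists_forall_norm_finsetSum_le {ι : Type*} {t : ι → E} {a : E}
    (h : HasSum t a) : ∃ C, ∀ F : Finset ι, ‖∑ i ∈ F, t i‖ ≤ C := by
  classical
  have h' : Tendsto (fun s : Finset ι => ∑ i ∈ s, t i) atTop (𝓝 a) := by simpa [HasSum] using h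
  obtain ⟨F₀, hF₀⟩ := eventually_atTop.1 (h'.norm.eventually (gt_mem_nhds (lt_add_one ‖a‖)))
  refine ⟨‖a‖ + 1 + ∑ i ∈ F₀, ‖t i‖, fun F => ?_⟩
  calc ‖∑ i ∈ F, t i‖ = ‖∑ i ∈ F ∪ F₀, t i - ∑ i ∈ F₀ \ F, t i‖ := by
        rw [← Finset.union_sdiff_self_eq_union, Finset.sum_union Finset.disjoint_sdiff,
          add_sub_cancel_right]
    _ ≤ ‖∑ i ∈ F ∪ F₀, t i‖ + ∑ i ∈ F₀ \ F, ‖t i‖ :=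
        (norm_sub_le _ _).trans (add_le_add_right (norm_sum_le _ _) _)
    _ ≤ ‖a‖ + 1 + ∑ i ∈ F₀, ‖t i‖ :=
        add_le_add (hF₀ _ Finset.subset_union_right).le
          (Finset.sum_le_sum_of_subset_of_nonneg Finset.sdiff_subset fun _ _ _ => norm_nonneg _)

theorem exists_forall_norm_finsetSum_smul_le {ι : Type*} (S : Submodule 𝕜 E) [CompleteSpace S]
    (f : ι → E) (g : ι → StrongDual 𝕜 E) (hqb : ∀ x ∈ S, HasSum (fun n => g n x • f n) x) :
    ∃ K, ∀ x ∈ S, ∀ F : Finset ι, ‖∑ n ∈ F, g n x • f n‖ ≤ K * ‖x‖ := by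
  let T : Finset ι → S →L[𝕜] E := fun F => ∑ n ∈ F, ((g n).comp S.subtypeL).smulRight (f n)
  have hT : ∀ F (x : S), T F x = ∑ n ∈ F, g n x • f n := fun F x => by simp [T]
  obtain ⟨K, hK⟩ := banach_steinhaus fun x : S => by
    obtain ⟨C, hC⟩ := (hqb x x.2).exists_forall_norm_finsetSum_le
    exact ⟨C, fun F => hT F x ▸ hC F⟩
  refine ⟨K, fun x hx F => ?_⟩
  simpa [hT] using (T F).le_of_opNorm_le (hK F) ⟨x, hx⟩

end Quasibasic

theorem exists_strongDual_eq_tsum_mul {E : Type*} [NormedAddCommGroup E] [NormedSpace ℝ E]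
    (S : Submodule ℝ E) (h : ℕ → StrongDual ℝ E) {M : ℝ}
    (hsum : ∀ x ∈ S, Summable fun n => |h n x|) (hM : ∀ x ∈ S, ∑' n, |h n x| ≤ M * ‖x‖)
    {b : ℕ → ℝ} (hb : ∀ n, |b n| ≤ 1) :
    ∃ φ : StrongDual ℝ E, ∀ x ∈ S, φ x = ∑' n, b n * h n x := by
  have hle : ∀ x n, ‖b n * h n x‖ ≤ |h n x| := fun x n => by
    rw [Real.norm_eq_abs, abs_mul]; exact mul_le_of_le_one_left (abs_nonneg _) (hb n)
  have hsb : ∀ x : S, Summable fun n => b n * h n x := fun x =>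
    (hsum x x.2).of_norm_bounded (hle x)
  let L : S →ₗ[ℝ] ℝ :=
    { toFun := fun x => ∑' n, b n * h n x
      map_add' := fun x y => by
        simp only [Submodule.coe_add, map_add, mul_add]; exact (hsb x).tsum_add (hsb y)
      map_smul' := fun c x => by
        simp only [Submodule.coe_smul, map_smul, smul_eq_mul, mul_left_comm (b _),
          RingHom.id_apply]
        exact tsum_mul_left }
  have hL : ∀ x : S, ‖L x‖ ≤ M * ‖x‖ := fun x =>
    (tsum_of_norm_bounded (hsum x x.2).hasSum (hle x)).trans (hM x x.2)
  obtain ⟨φ, hφ, -⟩ := exists_extension_norm_eq S (L.mkContinuous M hL)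
  exact ⟨φ, fun x hx => hφ ⟨x, hx⟩⟩

theorem tendsto_norm_apply_of_weaklyNull {E F : Type*} [NormedAddCommGroup E]
    [NormedSpace ℝ E] [NormedAddCommGroup F] [NormedSpace ℝ F]
    (S : Submodule ℝ E) [CompleteSpace S] (f : ℕ → E) (g : ℕ → StrongDual ℝ E)
    (hqb : ∀ x ∈ S, HasSum (fun n => g n x • f n) x)
    (J : E →L[ℝ] F) (I : StrongDual ℝ E) (hJI : ∀ n, ‖J (f n)‖ ≤ I (f n))
    (y : ℕ → E) (hy : ∀ k, y k ∈ S)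
    (hwnull : ∀ φ : StrongDual ℝ E, Tendsto (fun k => φ (y k)) atTop (𝓝 0)) :
    Tendsto (fun k => ‖J (y k)‖) atTop (𝓝 0) := by
  obtain ⟨K, hK⟩ := exists_forall_norm_finsetSum_smul_le S f g hqb
  set h : ℕ → StrongDual ℝ E := fun n => I (f n) • g n
  have habs : ∀ x n, |h n x| = |g n x| * I (f n) := fun x n => by
    simp only [h, smul_apply, smul_eq_mul, abs_mul, mul_comm,
      abs_of_nonneg ((norm_nonneg _).trans (hJI n))]
  have hfin : ∀ x ∈ S, ∀ F : Finset ℕ, ∑ n ∈ F, |h n x| ≤ 2 * ‖I‖ * K * ‖x‖ := fun x hx F =>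
    (Finset.sum_abs_le_two_mul _ (fun G => by
      calc |∑ n ∈ G, h n x| = ‖I (∑ n ∈ G, g n x • f n)‖ := by
            simp [h, map_sum, mul_comm]
        _ ≤ ‖I‖ * (K * ‖x‖) := I.le_opNorm_of_le (hK x hx G)) F).trans_eq (by ring)
  have hsum : ∀ x ∈ S, Summable fun n => |h n x| := fun x hx =>
    summable_of_sum_le (fun n => abs_nonneg _) (hfin x hx)
  have hJ : ∀ x ∈ S, ‖J x‖ ≤ ∑' n, |h n x| := fun x hx =>
    ((hqb x hx).mapL J).norm_le_of_bounded (hsum x hx).hasSum fun n => by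
      rw [map_smul, norm_smul, habs, Real.norm_eq_abs]
      exact mul_le_mul_of_nonneg_left (hJI n) (abs_nonneg _)
  have hschur : Tendsto (fun k => ∑' n, |h n (y k)|) atTop (𝓝 0) :=
    tendsto_tsum_abs_of_tendsto_tsum_mul (fun k => hsum _ (hy k)) fun b hb => by
      obtain ⟨φ, hφ⟩ := exists_strongDual_eq_tsum_mul S h hsum
        (fun x hx => (hsum x hx).tsum_le_of_sum_le (hfin x hx)) hb
      simpa only [hφ _ (hy _)] using hwnull φ
  exact squeeze_zero (fun k => norm_nonneg _) (fun k => hJ _ (hy k)) hschur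

namespace MeasureTheory.Lp

variable {α : Type*} [MeasurableSpace α] {μ : Measure α} [IsFiniteMeasure μ]
  {p : ℝ≥0∞} [Fact (1 ≤ p)]

theorem memLp_one (u : Lp ℝ p μ) : MemLp u 1 μ := (Lp.memLp u).mono_exponent Fact.out

theorem norm_toLp_one_le (u : Lp ℝ p μ) :
    ‖(memLp_one u).toLp u‖ ≤ (μ Set.univ ^ (1 - 1 / p.toReal)).toReal * ‖u‖ := by
  have hexp : 0 ≤ 1 - 1 / p.toReal := by
    rcases eq_or_ne p ∞ with rfl | hp
    · simp
    · rw [sub_nonneg]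
      exact div_le_one_of_le₀ (by simpa using ENNReal.toReal_mono hp (Fact.out : 1 ≤ p))
        ENNReal.toReal_nonneg
  rw [norm_toLp, norm_def, mul_comm, ← ENNReal.toReal_mul]
  refine ENNReal.toReal_mono (ENNReal.mul_ne_top (Lp.eLpNorm_ne_top u)
    (ENNReal.rpow_ne_top_of_nonneg hexp (measure_ne_top μ _))) ?_
  simpa using
    eLpNorm_le_eLpNorm_mul_rpow_measure_univ (Fact.out : 1 ≤ p) (Lp.aestronglyMeasurable u)

noncomputable def toL1 : Lp ℝ p μ →L[ℝ] Lp ℝ 1 μ :=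
  LinearMap.mkContinuous
    { toFun := fun u => (memLp_one u).toLp u
      map_add' := fun u v => by
        rw [← MemLp.toLp_add]; exact (MemLp.toLp_eq_toLp_iff _ _).2 (Lp.coeFn_add u v)
      map_smul' := fun c u => by
        rw [RingHom.id_apply, ← MemLp.toLp_const_smul]
        exact (MemLp.toLp_eq_toLp_iff _ _).2 (Lp.coeFn_smul c u) }
    _ norm_toLp_one_le

theorem coeFn_toL1 (u : Lp ℝ p μ) : toL1 u =ᵐ[μ] u := (memLp_one u).coeFn_toLp

theorem norm_toL1 (u : Lp ℝ p μ) : ‖toL1 u‖ = ∫ t, |u t| ∂μ := by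
  rw [L1.norm_eq_integral_norm]
  exact integral_congr_ae ((coeFn_toL1 u).mono fun t ht => by simp only [ht, Real.norm_eq_abs])

theorem integral_toL1 (u : Lp ℝ p μ) : L1.integralCLM (toL1 u) = ∫ t, u t ∂μ := by
  rw [← L1.integral_def, L1.integral_eq_integral]
  exact integral_congr_ae (coeFn_toL1 u)

end MeasureTheory.Lp

theorem stmt14_general (p : ℝ≥0∞) [Fact (1 ≤ p)]
    (f : ℕ → Lp ℝ p (volume.restrict (Set.Ioo (0 : ℝ) 1)))
    (g : ℕ → StrongDual ℝ (Lp ℝ p (volume.restrict (Set.Ioo (0 : ℝ) 1))))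
    (hpos : ∀ n, 0 ≤ᵐ[volume.restrict (Set.Ioo (0 : ℝ) 1)] ⇑(f n))
    (hqb : ∀ x ∈ (Submodule.span ℝ (Set.range f)).topologicalClosure,
      HasSum (fun n => g n x • f n) x)
    (y : ℕ → Lp ℝ p (volume.restrict (Set.Ioo (0 : ℝ) 1)))
    (hy : ∀ n, y n ∈ (Submodule.span ℝ (Set.range f)).topologicalClosure)
    (hwnull : ∀ φ : StrongDual ℝ (Lp ℝ p (volume.restrict (Set.Ioo (0 : ℝ) 1))),
      Tendsto (fun n => φ (y n)) atTop (𝓝 0)) :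
    Tendsto (fun n => ∫ t, |y n t| ∂(volume.restrict (Set.Ioo (0 : ℝ) 1))) atTop (𝓝 0) := by
  have hJI : ∀ n, ‖Lp.toL1 (f n)‖ ≤ (L1.integralCLM ∘L Lp.toL1) (f n) := fun n => by
    rw [ContinuousLinearMap.comp_apply, Lp.integral_toL1, Lp.norm_toL1]
    exact (integral_congr_ae ((hpos n).mono fun t ht => abs_of_nonneg ht)).le
  simpa only [Lp.norm_toL1] using
    tendsto_norm_apply_of_weaklyNull _ f g hqb Lp.toL1 _ hJI y hy hwnull

/-- let `1 < p < ∞` and let `(f_n, g_n)` be an unconditionally quasibasic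
sequence in `L_p(0,1)` with each `f_n ≥ 0` a.e.  If `(y_n)` is a normalized weakly null
sequence in the closed linear span of `{f_n}`, then `‖y_n‖_{L₁} → 0`. -/
theorem stmt14 (p : ℝ≥0∞) [Fact (1 ≤ p)] (hp1 : 1 < p) (hp2 : p ≠ ∞)
    (f : ℕ → Lp ℝ p (volume.restrict (Set.Ioo (0 : ℝ) 1)))
    (g : ℕ → StrongDual ℝ (Lp ℝ p (volume.restrict (Set.Ioo (0 : ℝ) 1))))
    (hpos : ∀ n, 0 ≤ᵐ[volume.restrict (Set.Ioo (0 : ℝ) 1)] ⇑(f n))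
    (hqb : ∀ x ∈ (Submodule.span ℝ (Set.range f)).topologicalClosure,
      HasSum (fun n => g n x • f n) x)
    (y : ℕ → Lp ℝ p (volume.restrict (Set.Ioo (0 : ℝ) 1)))
    (hy : ∀ n, y n ∈ (Submodule.span ℝ (Set.range f)).topologicalClosure)
    (hynorm : ∀ n, ‖y n‖ = 1)
    (hwnull : ∀ φ : StrongDual ℝ (Lp ℝ p (volume.restrict (Set.Ioo (0 : ℝ) 1))),
      Tendsto (fun n => φ (y n)) atTop (𝓝 0)) :
    Tendsto (fun n => ∫ t, |y n t| ∂(volume.restrict (Set.Ioo (0 : ℝ) 1))) atTop (𝓝 0) :=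
  stmt14_general p f g hpos hqb y hy hwnull
end

section
/- Let (f_n, g_n) be an unconditionally quasibasic sequence in L_1(0,1) with each f_n ≥ 0 a.e. and ‖f_n‖_1 = 1. Then there is a constant K such that for every y in the closed linear span [f_n], ‖y‖_1 ≤ ‖∑_n |⟨g_n, y⟩| f_n‖_1 ≤ K ‖y‖_1; consequently the map y ↦ (⟨g_n, y⟩)_{n} is an isomorphic embedding of [f_n] into ℓ_1. -/
/-!
Integration is a functional of norm one on `L₁` that equals `1` at every `f n`. Applying it to
`y = ∑ ⟨g n, y⟩ f n` shows that the real series `∑ ⟨g n, y⟩` converges unconditionally, hence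
absolutely, and applying it to `∑ |⟨g n, y⟩| f n` shows that this vector has norm exactly
`∑ |⟨g n, y⟩|`. So `y ↦ (⟨g n, y⟩)ₙ` maps `[f n]` into `ℓ₁`; its graph is closed, so it is bounded
by the closed graph theorem, which gives `K`, while the triangle inequality in
`y = ∑ ⟨g n, y⟩ f n` gives `‖y‖ ≤ ∑ |⟨g n, y⟩|`.
-/

open MeasureTheory Filter Topology ENNReal

section CoordinateMap

variable {𝕜 E ι : Type*} [NontriviallyNormedField 𝕜] [CompleteSpace 𝕜] [NormedAddCommGroup E]
  [NormedSpace 𝕜 E] {p : ℝ≥0∞} [Fact (1 ≤ p)]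

def coordinatesToLp (g : ι → StrongDual 𝕜 E) (hg : ∀ y, Memℓp (fun n => g n y) p) :
    E →ₗ[𝕜] lp (fun _ : ι => 𝕜) p where
  toFun y := ⟨fun n => g n y, hg y⟩
  map_add' y z := by ext n; exact map_add (g n) y z
  map_smul' c y := by ext n; exact map_smul (g n) c y

variable [CompleteSpace E]

noncomputable def coordinatesToLpCLM (g : ι → StrongDual 𝕜 E)
    (hg : ∀ y, Memℓp (fun n => g n y) p) : E →L[𝕜] lp (fun _ : ι => 𝕜) p :=
  ContinuousLinearMap.ofSeqClosedGraph (g := coordinatesToLp g hg) fun u x y hu hy => by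
    ext n
    have hlim : Tendsto (fun k => g n (u k)) atTop (𝓝 (y n)) :=
      ((lp.evalCLM 𝕜 _ p n).continuous.tendsto y).comp hy
    exact tendsto_nhds_unique hlim (((g n).continuous.tendsto x).comp hu)

@[simp]
theorem coordinatesToLpCLM_apply (g : ι → StrongDual 𝕜 E) (hg : ∀ y, Memℓp (fun n => g n y) p)
    (y : E) (n : ι) : coordinatesToLpCLM g hg y n = g n y :=
  rfl

end CoordinateMap

section NormingFunctional

variable {E ι : Type*} [NormedAddCommGroup E] [NormedSpace ℝ E] {φ : StrongDual ℝ E} {f : ι → E}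
  {c : ι → ℝ}

theorem summable_abs_of_summable_smul (hφf : ∀ n, φ (f n) = 1)
    (h : Summable fun n => c n • f n) : Summable fun n => |c n| :=
  summable_abs_iff.mpr (by simpa [hφf] using φ.summable h)

theorem summable_smul_of_summable_abs [CompleteSpace E] (hf : ∀ n, ‖f n‖ = 1)
    (hc : Summable fun n => |c n|) : Summable fun n => c n • f n :=
  .of_norm (by simpa [norm_smul, hf] using hc)

theorem norm_tsum_smul_le_tsum_abs (hf : ∀ n, ‖f n‖ = 1) (hc : Summable fun n => |c n|) :
    ‖∑' n, c n • f n‖ ≤ ∑' n, |c n| := by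
  simpa [norm_smul, hf] using norm_tsum_le_tsum_norm (f := fun n => c n • f n)
    (by simpa [norm_smul, hf] using hc)

theorem norm_tsum_smul_of_nonneg [CompleteSpace E] (hφ : ‖φ‖ ≤ 1) (hf : ∀ n, ‖f n‖ = 1)
    (hφf : ∀ n, φ (f n) = 1) (hc : 0 ≤ c) (hs : Summable c) :
    ‖∑' n, c n • f n‖ = ∑' n, c n := by
  have habs : ∀ n, |c n| = c n := fun n => abs_of_nonneg (hc n)
  have hs' : Summable fun n => |c n| := by simpa only [habs] using hs
  refine le_antisymm (by simpa only [habs] using norm_tsum_smul_le_tsum_abs hf hs') ?_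
  calc ∑' n, c n = φ (∑' n, c n • f n) := by
        rw [φ.map_tsum (summable_smul_of_summable_abs hf hs')]; simp [hφf]
    _ ≤ ‖φ‖ * ‖∑' n, c n • f n‖ := (le_abs_self _).trans (φ.le_opNorm _)
    _ ≤ ‖∑' n, c n • f n‖ := mul_le_of_le_one_left (norm_nonneg _) hφ

end NormingFunctional

theorem L1.integralCLM_eq_norm_of_nonneg {α : Type*} [MeasurableSpace α] {μ : Measure α}
    {h : α →₁[μ] ℝ} (hh : 0 ≤ᵐ[μ] h) : L1.integralCLM h = ‖h‖ := by
  rw [← L1.integral_eq, L1.integral_eq_integral, L1.norm_eq_integral_norm]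
  refine integral_congr_ae ?_
  filter_upwards [hh] with a ha
  exact (Real.norm_of_nonneg ha).symm

/-- let `(f_n, g_n)` be an unconditionally quasibasic sequence in `L₁(0,1)`
with each `f_n ≥ 0` a.e. and `‖f_n‖₁ = 1`.  Then there is a constant `K` with
`‖y‖₁ ≤ ‖∑ |⟨g_n, y⟩| f_n‖₁ ≤ K ‖y‖₁` for all `y` in the closed linear span `[f_n]`;
consequently `y ↦ (⟨g_n, y⟩)ₙ` is an isomorphic embedding of `[f_n]` into `ℓ₁`. -/
theorem stmt17
    (f : ℕ → Lp ℝ 1 (volume.restrict (Set.Ioo (0 : ℝ) 1)))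
    (g : ℕ → StrongDual ℝ (Lp ℝ 1 (volume.restrict (Set.Ioo (0 : ℝ) 1))))
    (hnorm : ∀ n, ‖f n‖ = 1)
    (hpos : ∀ n, 0 ≤ᵐ[volume.restrict (Set.Ioo (0 : ℝ) 1)] ⇑(f n))
    (hqb : ∀ x ∈ (Submodule.span ℝ (Set.range f)).topologicalClosure,
      HasSum (fun n => g n x • f n) x) :
    ∃ K : ℝ,
      (∀ y ∈ (Submodule.span ℝ (Set.range f)).topologicalClosure,
        Summable (fun n => |g n y| • f n) ∧
        ‖y‖ ≤ ‖∑' n, |g n y| • f n‖ ∧ ‖∑' n, |g n y| • f n‖ ≤ K * ‖y‖) ∧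
      ∃ (T : (Submodule.span ℝ (Set.range f)).topologicalClosure →L[ℝ]
          lp (fun _ : ℕ => ℝ) 1) (c : ℝ), 0 < c ∧
        (∀ (y : (Submodule.span ℝ (Set.range f)).topologicalClosure) (n : ℕ),
          (T y : ∀ _ : ℕ, ℝ) n = g n (y : Lp ℝ 1 (volume.restrict (Set.Ioo (0 : ℝ) 1)))) ∧
        ∀ y : (Submodule.span ℝ (Set.range f)).topologicalClosure, c * ‖y‖ ≤ ‖T y‖ := by
  set M := (Submodule.span ℝ (Set.range f)).topologicalClosure
  have : CompleteSpace M := (Submodule.isClosed_topologicalClosure _).completeSpace_coe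
  have hφf : ∀ n, L1.integralCLM (f n) = 1 := fun n =>
    (L1.integralCLM_eq_norm_of_nonneg (hpos n)).trans (hnorm n)
  have hsumm : ∀ y ∈ M, Summable fun n => |g n y| := fun y hy =>
    summable_abs_of_summable_smul hφf (hqb y hy).summable
  have hmod : ∀ y ∈ M, ‖∑' n, |g n y| • f n‖ = ∑' n, |g n y| := fun y hy =>
    norm_tsum_smul_of_nonneg L1.norm_Integral_le_one hnorm hφf (fun _ => abs_nonneg _)
      (hsumm y hy)
  have hlow : ∀ y ∈ M, ‖y‖ ≤ ∑' n, |g n y| := fun y hy => by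
    simpa only [(hqb y hy).tsum_eq] using norm_tsum_smul_le_tsum_abs hnorm (hsumm y hy)
  let T : M →L[ℝ] lp (fun _ : ℕ => ℝ) 1 :=
    coordinatesToLpCLM (fun n => (g n).comp M.subtypeL) fun y =>
      memℓp_gen (by simpa using hsumm y y.2)
  have hT : ∀ y : M, ‖T y‖ = ∑' n, |g n y| := fun y => by
    rw [lp.norm_eq_tsum_rpow (by simp)]; simp [T]
  refine ⟨‖T‖, fun y hy => ⟨summable_smul_of_summable_abs hnorm (by simpa using hsumm y hy),
    (hmod y hy).symm ▸ hlow y hy, ?_⟩, T, 1, one_pos, fun y n => rfl, fun y => ?_⟩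
  · rw [hmod y hy, ← hT ⟨y, hy⟩]
    exact T.le_opNorm _
  · rw [one_mul, hT]
    exact hlow y y.2
end
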